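/- arXiv:2001.04151 — 8 statements merged into one kernel-verified Lean document; each statement's English description precedes it below -/
import Mathlib

section
/- Let g ∈ C²([0,1], ℝ) with g(0) = g(1) = 0. Then ∫₀¹ |(d/dr)(r g(r))|² (1/r) dr ≤ (∫₀¹ |(Lg)(r)|² r dr)^{1/2} (∫₀¹ |g(r)|² r dr)^{1/2} ≤ ∫₀¹ |(Lg)(r)|² r dr (all quantities may be +∞). -/
/-!
Write `u = r g`, so that `u' = (r g)'` and `L g = (u' / r)'`. Integrating `(g u')' = u'² / r + (L g) g r`
over `(0, 1)`, where `g u'` vanishes at both ends, gives `∫ u'² / r = -∫ (L g) g r`; Cauchy–Schwarz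
with weight `r` then yields the first inequality. For the second, `u(r) = ∫₀ʳ u'` and Cauchy–Schwarz
give `u(r)² ≤ r² ∫₀ʳ u'² / s`, whence the Hardy-type bound `∫ g² r = ∫ u² / r ≤ ∫ u'² / r`.
So `B ≤ √A √B` with `A = ∫ (L g)² r` and `B = ∫ g² r < ∞`, i.e. `√B ≤ √A`, and `√A √B ≤ A`.
-/

open MeasureTheory Set

/-- The operator `L g = g'' + g'/r - g/r²`. -/
noncomputable def Lre (g : ℝ → ℝ) (r : ℝ) : ℝ :=
  deriv (deriv g) r + deriv g r / r - g r / r ^ 2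

theorem ENNReal.rpow_half_mul_rpow_half (c : ENNReal) : c ^ ((1:ℝ)/2) * c ^ ((1:ℝ)/2) = c := by
  rw [← ENNReal.rpow_add_of_nonneg _ _ (by norm_num) (by norm_num)]; norm_num

theorem ENNReal.rpow_half_mul_rpow_half_le_of_le {a b : ENNReal} (hb : b ≠ ⊤)
    (h : b ≤ a ^ ((1:ℝ)/2) * b ^ ((1:ℝ)/2)) : a ^ ((1:ℝ)/2) * b ^ ((1:ℝ)/2) ≤ a := by
  rcases eq_or_ne (b ^ ((1:ℝ)/2)) 0 with hb0 | hb0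
  · rw [hb0, mul_zero]; exact zero_le
  have hba : b ^ ((1:ℝ)/2) ≤ a ^ ((1:ℝ)/2) := by
    rw [← ENNReal.mul_le_mul_iff_left hb0 (ENNReal.rpow_ne_top_of_nonneg (by norm_num) hb),
      ENNReal.rpow_half_mul_rpow_half]
    exact h
  calc a ^ ((1:ℝ)/2) * b ^ ((1:ℝ)/2) ≤ a ^ ((1:ℝ)/2) * a ^ ((1:ℝ)/2) := by gcongr
    _ = a := ENNReal.rpow_half_mul_rpow_half a

theorem ENNReal.ofReal_abs_mul_mul_eq_rpow_half_mul_rpow_half {x y w : ℝ} (hw : 0 ≤ w) :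
    ENNReal.ofReal (|x * y| * w)
      = ENNReal.ofReal (|x| ^ 2 * w) ^ ((1:ℝ)/2) * ENNReal.ofReal (|y| ^ 2 * w) ^ ((1:ℝ)/2) := by
  rw [ENNReal.ofReal_rpow_of_nonneg (by positivity) (by norm_num),
    ENNReal.ofReal_rpow_of_nonneg (by positivity) (by norm_num),
    ← ENNReal.ofReal_mul (by positivity), ← Real.mul_rpow (by positivity) (by positivity),
    ← Real.sqrt_eq_rpow, show |x| ^ 2 * w * (|y| ^ 2 * w) = (|x * y| * w) ^ 2 by rw [abs_mul]; ring,
    Real.sqrt_sq (by positivity)]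

theorem lintegral_ofReal_abs_mul_mul_le {α : Type*} [MeasurableSpace α] {μ : Measure α}
    {f g w : α → ℝ} (hf : AEMeasurable f μ) (hg : AEMeasurable g μ) (hw : AEMeasurable w μ)
    (hw0 : 0 ≤ᵐ[μ] w) :
    ∫⁻ x, ENNReal.ofReal (|f x * g x| * w x) ∂μ
      ≤ (∫⁻ x, ENNReal.ofReal (|f x| ^ 2 * w x) ∂μ) ^ ((1:ℝ)/2)
        * (∫⁻ x, ENNReal.ofReal (|g x| ^ 2 * w x) ∂μ) ^ ((1:ℝ)/2) := by
  calc ∫⁻ x, ENNReal.ofReal (|f x * g x| * w x) ∂μ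
      = ∫⁻ x, ENNReal.ofReal (|f x| ^ 2 * w x) ^ ((1:ℝ)/2)
          * ENNReal.ofReal (|g x| ^ 2 * w x) ^ ((1:ℝ)/2) ∂μ :=
        lintegral_congr_ae
          (hw0.mono fun x hx => ENNReal.ofReal_abs_mul_mul_eq_rpow_half_mul_rpow_half hx)
    _ ≤ _ := ENNReal.lintegral_mul_norm_pow_le (by fun_prop) (by fun_prop)
        (by norm_num) (by norm_num) (by norm_num)

theorem integral_Ioo_deriv_eq_sub {u : ℝ → ℝ} (hu : ContDiff ℝ 1 u) {r : ℝ} (hr : 0 ≤ r) :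
    ∫ s in Ioo 0 r, deriv u s = u r - u 0 := by
  rw [← integral_Ioc_eq_integral_Ioo, ← intervalIntegral.integral_of_le hr,
    intervalIntegral.integral_deriv_eq_sub (fun x _ => hu.differentiable one_ne_zero x)
      ((hu.continuous_deriv le_rfl).intervalIntegrable _ _)]

theorem ofReal_sq_le_mul_lintegral_deriv_sq_div {u : ℝ → ℝ} (hu : ContDiff ℝ 1 u) (hu0 : u 0 = 0)
    {r : ℝ} (hr : 0 < r) :
    ENNReal.ofReal (|u r| ^ 2)
      ≤ ENNReal.ofReal (r ^ 2) * ∫⁻ s in Ioo 0 r, ENNReal.ofReal (|deriv u s| ^ 2 / s) := by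
  set D := ∫⁻ s in Ioo 0 r, ENNReal.ofReal (|deriv u s| ^ 2 / s)
  have hweight : ∫⁻ s in Ioo 0 r, ENNReal.ofReal (|(1:ℝ)| ^ 2 * s) ≤ ENNReal.ofReal (r ^ 2) :=
    calc ∫⁻ s in Ioo 0 r, ENNReal.ofReal (|(1:ℝ)| ^ 2 * s)
        ≤ ∫⁻ _ in Ioo 0 r, ENNReal.ofReal r :=
          setLIntegral_mono measurable_const fun s hs => ENNReal.ofReal_le_ofReal (by
            simpa using hs.2.le)
      _ = ENNReal.ofReal (r ^ 2) := by
          rw [setLIntegral_const, Real.volume_Ioo, sub_zero, ← ENNReal.ofReal_mul hr.le, sq]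
  have hCS : ENNReal.ofReal |u r| ≤ ENNReal.ofReal (r ^ 2) ^ ((1:ℝ)/2) * D ^ ((1:ℝ)/2) :=
    calc ENNReal.ofReal |u r| = ‖∫ s in Ioo 0 r, deriv u s‖ₑ := by
          rw [integral_Ioo_deriv_eq_sub hu hr.le, hu0, sub_zero, Real.enorm_eq_ofReal_abs]
      _ ≤ ∫⁻ s in Ioo 0 r, ‖deriv u s‖ₑ := enorm_integral_le_lintegral_enorm _
      _ = ∫⁻ s in Ioo 0 r, ENNReal.ofReal (|1 * (deriv u s / s)| * s) :=
          setLIntegral_congr_fun measurableSet_Ioo fun s hs => by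
            rw [Real.enorm_eq_ofReal_abs, one_mul, abs_div, abs_of_pos hs.1,
              div_mul_cancel₀ _ hs.1.ne']
      _ ≤ (∫⁻ s in Ioo 0 r, ENNReal.ofReal (|(1:ℝ)| ^ 2 * s)) ^ ((1:ℝ)/2)
          * (∫⁻ s in Ioo 0 r, ENNReal.ofReal (|deriv u s / s| ^ 2 * s)) ^ ((1:ℝ)/2) :=
          lintegral_ofReal_abs_mul_mul_le (by fun_prop) (by fun_prop) (by fun_prop)
            ((ae_restrict_iff' measurableSet_Ioo).2 (ae_of_all _ fun s hs => hs.1.le))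
      _ = (∫⁻ s in Ioo 0 r, ENNReal.ofReal (|(1:ℝ)| ^ 2 * s)) ^ ((1:ℝ)/2) * D ^ ((1:ℝ)/2) := by
          congr 2
          refine setLIntegral_congr_fun measurableSet_Ioo fun s hs => ?_
          rw [abs_div, abs_of_pos hs.1]
          field_simp
      _ ≤ ENNReal.ofReal (r ^ 2) ^ ((1:ℝ)/2) * D ^ ((1:ℝ)/2) := by gcongr
  calc ENNReal.ofReal (|u r| ^ 2) = ENNReal.ofReal |u r| ^ 2 := ENNReal.ofReal_pow (abs_nonneg _) 2
    _ ≤ (ENNReal.ofReal (r ^ 2) ^ ((1:ℝ)/2) * D ^ ((1:ℝ)/2)) ^ 2 := by gcongr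
    _ = ENNReal.ofReal (r ^ 2) * D := by
        rw [sq, mul_mul_mul_comm, ENNReal.rpow_half_mul_rpow_half,
          ENNReal.rpow_half_mul_rpow_half]

theorem lintegral_sq_div_le_lintegral_deriv_sq_div {u : ℝ → ℝ} (hu : ContDiff ℝ 1 u)
    (hu0 : u 0 = 0) :
    ∫⁻ r in Ioo 0 1, ENNReal.ofReal (|u r| ^ 2 / r)
      ≤ ∫⁻ r in Ioo 0 1, ENNReal.ofReal (|deriv u r| ^ 2 / r) := by
  set D := ∫⁻ r in Ioo 0 1, ENNReal.ofReal (|deriv u r| ^ 2 / r)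
  have hpoint : ∀ r ∈ Ioo (0:ℝ) 1, ENNReal.ofReal (|u r| ^ 2 / r) ≤ D := fun r ⟨hr0, hr1⟩ =>
    calc ENNReal.ofReal (|u r| ^ 2 / r) ≤ ENNReal.ofReal (|u r| ^ 2 / r ^ 2) :=
          ENNReal.ofReal_le_ofReal (div_le_div_of_nonneg_left (by positivity) (by positivity)
            (by nlinarith))
      _ = ENNReal.ofReal (|u r| ^ 2) / ENNReal.ofReal (r ^ 2) :=
          ENNReal.ofReal_div_of_pos (by positivity)
      _ ≤ D := by
          refine ENNReal.div_le_of_le_mul ?_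
          rw [mul_comm]
          exact (ofReal_sq_le_mul_lintegral_deriv_sq_div hu hu0 hr0).trans
            (by gcongr; exact lintegral_mono_set (Ioo_subset_Ioo_right hr1.le))
  calc ∫⁻ r in Ioo 0 1, ENNReal.ofReal (|u r| ^ 2 / r) ≤ ∫⁻ _ in Ioo (0:ℝ) 1, D :=
        setLIntegral_mono measurable_const hpoint
    _ = D := by simp [Real.volume_Ioo]

-- `f r ^ 2 / r = dslope f 0 r * f r` for every `r`, including `r = 0` where both sides vanish.
theorem continuous_sq_div_of_eq_zero {f : ℝ → ℝ} (hf : Continuous f)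
    (hf' : DifferentiableAt ℝ f 0) (hf0 : f 0 = 0) : Continuous fun r => f r ^ 2 / r := by
  have hslope : Continuous (dslope f 0) :=
    continuousOn_univ.1 ((continuousOn_dslope Filter.univ_mem).2 ⟨hf.continuousOn, hf'⟩)
  convert hslope.mul hf using 1
  ext r
  rcases eq_or_ne r 0 with rfl | hr
  · simp [hf0]
  · rw [Pi.mul_apply, dslope_of_ne _ hr, slope_def_field, hf0, sub_zero, sub_zero]
    ring

theorem measurable_Lre {g : ℝ → ℝ} (hg : Measurable g) : Measurable (Lre g) := by
  unfold Lre
  fun_prop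

section

variable {g : ℝ → ℝ}

theorem deriv_id_mul_eq (hg : Differentiable ℝ g) :
    deriv (fun s => s * g s) = fun r => g r + r * deriv g r := by
  ext r
  rw [((hasDerivAt_id' r).fun_mul (hg r).hasDerivAt).deriv, one_mul]

theorem continuous_sq_deriv_id_mul_div (hg : ContDiff ℝ 2 g) (h0 : g 0 = 0) :
    Continuous fun r => (g r + r * deriv g r) ^ 2 / r :=
  continuous_sq_div_of_eq_zero (by have := hg.continuous_deriv one_le_two; fun_prop)
    ((hg.differentiable two_ne_zero 0).add
      (differentiableAt_id.mul (hg.differentiable_deriv_two 0)))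
    (by simp [h0])

-- The first two terms are `(g · (r g)')'`. The identity also holds at `r = 0`, where `x / 0 = 0`.
theorem Lre_mul_mul_eq (h0 : g 0 = 0) (r : ℝ) :
    Lre g r * g r * r
      = deriv g r * (g r + r * deriv g r) + g r * (2 * deriv g r + r * deriv (deriv g) r)
        - (g r + r * deriv g r) ^ 2 / r := by
  rcases eq_or_ne r 0 with rfl | hr
  · simp [h0]
  · unfold Lre
    field_simp
    ring

theorem integral_Lre_mul_mul_eq (hg : ContDiff ℝ 2 g) (h0 : g 0 = 0) (h1 : g 1 = 0) :
    ∫ r in Ioo 0 1, Lre g r * g r * r = -∫ r in Ioo 0 1, (g r + r * deriv g r) ^ 2 / r := by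
  have hg₁ : Differentiable ℝ g := hg.differentiable two_ne_zero
  have hg₂ : Differentiable ℝ (deriv g) := hg.differentiable_deriv_two
  have hg₂c : Continuous (deriv (deriv g)) := (hg.deriv' (n := 1)).continuous_deriv_one
  have hv : ∀ r, HasDerivAt (fun s => g s + s * deriv g s)
      (2 * deriv g r + r * deriv (deriv g) r) r := fun r =>
    ((hg₁ r).hasDerivAt.add ((hasDerivAt_id' r).fun_mul (hg₂ r).hasDerivAt)).congr_deriv
      (by ring)
  have hφ : ∀ r, HasDerivAt (fun s => g s * (g s + s * deriv g s))
      (deriv g r * (g r + r * deriv g r) + g r * (2 * deriv g r + r * deriv (deriv g) r)) r :=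
    fun r => (hg₁ r).hasDerivAt.fun_mul (hv r)
  have hφc : Continuous fun r =>
      deriv g r * (g r + r * deriv g r) + g r * (2 * deriv g r + r * deriv (deriv g) r) := by
    have := hg₁.continuous; have := hg₂.continuous; fun_prop
  have hvc := continuous_sq_deriv_id_mul_div hg h0
  simp only [← integral_Ioc_eq_integral_Ioo, ← intervalIntegral.integral_of_le zero_le_one,
    Lre_mul_mul_eq h0]
  rw [intervalIntegral.integral_sub (hφc.intervalIntegrable _ _) (hvc.intervalIntegrable _ _),
    intervalIntegral.integral_eq_sub_of_hasDerivAt (fun r _ => hφ r) (hφc.intervalIntegrable _ _)]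
  simp [h0, h1]

theorem lintegral_sq_deriv_id_mul_div_le (hg : ContDiff ℝ 2 g) (h0 : g 0 = 0) (h1 : g 1 = 0) :
    ∫⁻ r in Ioo 0 1, ENNReal.ofReal (|deriv (fun s => s * g s) r| ^ 2 / r)
      ≤ (∫⁻ r in Ioo 0 1, ENNReal.ofReal (|Lre g r| ^ 2 * r)) ^ ((1:ℝ)/2)
        * (∫⁻ r in Ioo 0 1, ENNReal.ofReal (|g r| ^ 2 * r)) ^ ((1:ℝ)/2) := by
  have hgc : Continuous g := hg.continuous
  have hJ_nonneg : 0 ≤ ∫ r in Ioo 0 1, (g r + r * deriv g r) ^ 2 / r :=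
    setIntegral_nonneg measurableSet_Ioo fun r hr => div_nonneg (sq_nonneg _) hr.1.le
  have hr_nonneg : ∀ᵐ r ∂(volume.restrict (Ioo (0:ℝ) 1)), 0 ≤ r :=
    (ae_restrict_iff' measurableSet_Ioo).2 (ae_of_all _ fun r hr => hr.1.le)
  simp only [deriv_id_mul_eq (hg.differentiable two_ne_zero), sq_abs]
  calc ∫⁻ r in Ioo 0 1, ENNReal.ofReal ((g r + r * deriv g r) ^ 2 / r)
      = ENNReal.ofReal (∫ r in Ioo 0 1, (g r + r * deriv g r) ^ 2 / r) :=
        (ofReal_integral_eq_lintegral_ofReal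
          ((continuous_sq_deriv_id_mul_div hg h0).integrableOn_Icc.mono_set Ioo_subset_Icc_self)
          (hr_nonneg.mono fun r hr => div_nonneg (sq_nonneg _) hr)).symm
    _ = ‖∫ r in Ioo 0 1, Lre g r * g r * r‖ₑ := by
        rw [integral_Lre_mul_mul_eq hg h0 h1, Real.enorm_eq_ofReal_abs, abs_neg,
          abs_of_nonneg hJ_nonneg]
    _ ≤ ∫⁻ r in Ioo 0 1, ‖Lre g r * g r * r‖ₑ := enorm_integral_le_lintegral_enorm _
    _ = ∫⁻ r in Ioo 0 1, ENNReal.ofReal (|Lre g r * g r| * r) :=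
        setLIntegral_congr_fun measurableSet_Ioo fun r hr => by
          rw [Real.enorm_eq_ofReal_abs, abs_mul _ r, abs_of_pos hr.1]
    _ ≤ _ := by
        simpa only [sq_abs] using lintegral_ofReal_abs_mul_mul_le (w := fun r => r)
          (measurable_Lre hgc.measurable).aemeasurable hgc.aemeasurable aemeasurable_id' hr_nonneg

end

/-- For `g ∈ C²([0,1])` with `g(0) = g(1) = 0`,
`∫₀¹ |(d/dr)(rg)|² (1/r) dr ≤ (∫₀¹ |Lg|² r dr)^{1/2} (∫₀¹ |g|² r dr)^{1/2}
  ≤ ∫₀¹ |Lg|² r dr` (all quantities may be `+∞`). -/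
theorem stmt1 (g : ℝ → ℝ) (hg : ContDiff ℝ 2 g) (h0 : g 0 = 0) (h1 : g 1 = 0) :
    (∫⁻ r in Ioo (0:ℝ) 1, ENNReal.ofReal (|deriv (fun s => s * g s) r| ^ 2 / r))
      ≤ (∫⁻ r in Ioo (0:ℝ) 1, ENNReal.ofReal (|Lre g r| ^ 2 * r)) ^ ((1:ℝ)/2)
        * (∫⁻ r in Ioo (0:ℝ) 1, ENNReal.ofReal (|g r| ^ 2 * r)) ^ ((1:ℝ)/2)
    ∧ (∫⁻ r in Ioo (0:ℝ) 1, ENNReal.ofReal (|Lre g r| ^ 2 * r)) ^ ((1:ℝ)/2)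
        * (∫⁻ r in Ioo (0:ℝ) 1, ENNReal.ofReal (|g r| ^ 2 * r)) ^ ((1:ℝ)/2)
      ≤ ∫⁻ r in Ioo (0:ℝ) 1, ENNReal.ofReal (|Lre g r| ^ 2 * r) := by
  have hD := lintegral_sq_deriv_id_mul_div_le hg h0 h1
  have hB : ∫⁻ r in Ioo (0:ℝ) 1, ENNReal.ofReal (|g r| ^ 2 * r)
      ≤ ∫⁻ r in Ioo (0:ℝ) 1, ENNReal.ofReal (|deriv (fun s => s * g s) r| ^ 2 / r) :=
    calc ∫⁻ r in Ioo (0:ℝ) 1, ENNReal.ofReal (|g r| ^ 2 * r)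
        = ∫⁻ r in Ioo (0:ℝ) 1, ENNReal.ofReal (|r * g r| ^ 2 / r) :=
          setLIntegral_congr_fun measurableSet_Ioo fun r hr => by
            rw [abs_mul, mul_pow, abs_of_pos hr.1]
            field_simp
      _ ≤ _ := lintegral_sq_div_le_lintegral_deriv_sq_div
          (contDiff_id.mul (hg.of_le one_le_two)) (by simp)
  have hB_ne_top : ∫⁻ r in Ioo (0:ℝ) 1, ENNReal.ofReal (|g r| ^ 2 * r) ≠ ⊤ := by
    have hcont : Continuous fun r => |g r| ^ 2 * r := by have := hg.continuous; fun_prop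
    have hint : IntegrableOn (fun r => |g r| ^ 2 * r) (Ioo 0 1) :=
      hcont.integrableOn_Icc.mono_set Ioo_subset_Icc_self
    exact ((lintegral_mono fun r => Real.ofReal_le_enorm _).trans_lt hint.2).ne
  exact ⟨hD, ENNReal.rpow_half_mul_rpow_half_le_of_le hB_ne_top (hB.trans hD)⟩
end

section
/- Let g ∈ C¹([0,1], ℝ) with g(0) = 0. Then ∫₀¹ |g(r)|² dr ≤ (1/2) ∫₀¹ |g'(r)|² (1 − r²) dr. -/
/-!
Since `g 0 = 0`, Cauchy–Schwarz on `g r = ∫₀ʳ g'` gives `g(r)² ≤ r ∫₀ʳ g'²`. Integrating in `r`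
and integrating by parts against `(r² - 1) / 2`, a primitive of `r` vanishing at `1`, turns the
right-hand side into `½ ∫₀¹ g'(t)² (1 - t²) dt`.
-/

open MeasureTheory Set

theorem sq_integral_le_measureReal_mul_integral_sq {α : Type*} [MeasurableSpace α]
    {μ : Measure α} [IsFiniteMeasure μ] {f : α → ℝ} (hf : Integrable f μ)
    (hf2 : Integrable (fun x => f x ^ 2) μ) :
    (∫ x, f x ∂μ) ^ 2 ≤ μ.real univ * ∫ x, f x ^ 2 ∂μ := by
  rcases eq_zero_or_neZero μ with rfl | _
  · simp
  have hm : 0 < μ.real univ := by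
    simp [Measure.real, ENNReal.toReal_pos_iff, measure_lt_top, NeZero.ne μ]
  have jensen := (Even.convexOn_pow (𝕜 := ℝ) even_two).map_average_le
    (continuous_pow 2).continuousOn isClosed_univ (by simp) hf hf2
  simp only [average_eq, smul_eq_mul] at jensen
  field_simp at jensen
  exact jensen

theorem sq_le_mul_integral_deriv_sq {g : ℝ → ℝ} (hg : ContDiff ℝ 1 g) (h0 : g 0 = 0)
    {r : ℝ} (hr : 0 ≤ r) : g r ^ 2 ≤ r * ∫ t in (0:ℝ)..r, deriv g t ^ 2 := by
  have hg' : Continuous (deriv g) := hg.continuous_deriv le_rfl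
  have ftc : g r = ∫ t in (0:ℝ)..r, deriv g t := by
    rw [intervalIntegral.integral_deriv_eq_sub (fun x _ => hg.differentiable one_ne_zero x)
      (hg'.intervalIntegrable 0 r), h0, sub_zero]
  have cauchy_schwarz := sq_integral_le_measureReal_mul_integral_sq
    (μ := volume.restrict (Ioc 0 r)) hg'.integrableOn_Ioc (hg'.pow 2).integrableOn_Ioc
  rw [measureReal_restrict_apply_univ, Real.volume_real_Ioc_of_le hr, sub_zero] at cauchy_schwarz
  rwa [ftc, intervalIntegral.integral_of_le hr, intervalIntegral.integral_of_le hr]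

theorem integral_mul_primitive_eq {h : ℝ → ℝ} (hh : Continuous h) :
    ∫ r in (0:ℝ)..1, r * ∫ t in (0:ℝ)..r, h t = ∫ t in (0:ℝ)..1, h t * (1 - t ^ 2) / 2 := by
  have parts := intervalIntegral.integral_mul_deriv_eq_deriv_mul
    (u := fun r => ∫ t in (0:ℝ)..r, h t) (v := fun r : ℝ => (r ^ 2 - 1) / 2) (u' := h) (v' := id)
    (fun x _ => (hh.integral_hasStrictDerivAt 0 x).hasDerivAt)
    (fun x _ => by simpa using ((hasDerivAt_pow 2 x).sub_const 1).div_const 2)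
    (hh.intervalIntegrable 0 1) (continuous_id.intervalIntegrable 0 1)
  calc _ = ∫ r in (0:ℝ)..1, (∫ t in (0:ℝ)..r, h t) * r := by simp only [mul_comm]
    _ = -∫ t in (0:ℝ)..1, h t * ((t ^ 2 - 1) / 2) := by simpa using parts
    _ = _ := by rw [← intervalIntegral.integral_neg]; congr 1; ext t; ring

/-- For `g ∈ C¹([0,1])` with `g(0)=0`,
`∫₀¹ |g(r)|² dr ≤ (1/2) ∫₀¹ |g'(r)|² (1 − r²) dr`. -/
theorem stmt2 (g : ℝ → ℝ) (hg : ContDiff ℝ 1 g) (h0 : g 0 = 0) :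
    (∫ r in Ioo (0:ℝ) 1, |g r| ^ 2)
      ≤ (1 / 2) * ∫ r in Ioo (0:ℝ) 1, |deriv g r| ^ 2 * (1 - r ^ 2) := by
  have hg'2 : Continuous fun t => deriv g t ^ 2 := (hg.continuous_deriv le_rfl).pow 2
  have hF : Continuous fun r => ∫ t in (0:ℝ)..r, deriv g t ^ 2 :=
    intervalIntegral.continuous_primitive (fun _ _ => hg'2.intervalIntegrable _ _) 0
  have hIoo (f : ℝ → ℝ) : ∫ r in Ioo (0:ℝ) 1, f r = ∫ r in (0:ℝ)..1, f r := by
    rw [intervalIntegral.integral_of_le zero_le_one, integral_Ioc_eq_integral_Ioo]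
  simp only [sq_abs, hIoo]
  calc ∫ r in (0:ℝ)..1, g r ^ 2
      ≤ ∫ r in (0:ℝ)..1, r * ∫ t in (0:ℝ)..r, deriv g t ^ 2 :=
        intervalIntegral.integral_mono_on zero_le_one
          ((hg.continuous.pow 2).intervalIntegrable 0 1)
          ((continuous_id.mul hF).intervalIntegrable 0 1)
          fun r hr => sq_le_mul_integral_deriv_sq hg h0 hr.1
    _ = ∫ t in (0:ℝ)..1, deriv g t ^ 2 * (1 - t ^ 2) / 2 := integral_mul_primitive_eq hg'2
    _ = _ := by rw [← intervalIntegral.integral_const_mul]; congr 1; ext t; ring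
end

section
/- There exists a constant C > 0 such that for every g ∈ C¹([0,1], ℝ) with g(0) = 0, one has ∫₀¹ |g(r)|² r dr ≤ C ∫₀¹ |(d/dr)(r g(r))|² (1 − r²)/r dr (the right-hand side may be +∞). -/
open MeasureTheory Set Filter Topology Real

/-!
Put `h r = r g(r)`. Integrating `(h² log r)' = 2 h h' log r + h² / r` over `[ε, 1]` expresses
`∫_ε^1 g² r = ∫_ε^1 h² / r` through `-h(ε)² log ε` and `∫_ε^1 2 h h' log r`. Since
`(r log r)² ≤ (1 - r)² ≤ 1 - r²` on `(0, 1]`, AM-GM bounds the integrand `-2 h h' log r` by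
`h² / (2r) + 2 h'² (1 - r²) / r`, and the boundary term `-(ε g(ε))² log ε` tends to `0` as
`ε → 0⁺` because `ε log ε` does.
-/

lemma sq_mul_log_le_one_sub_sq {x : ℝ} (hx0 : 0 < x) (hx1 : x ≤ 1) :
    (x * log x) ^ 2 ≤ 1 - x ^ 2 := by
  have hlog : x * log x ≤ 0 := mul_nonpos_of_nonneg_of_nonpos hx0.le (log_nonpos hx0.le hx1)
  have hneg : -(x * log x) ≤ 1 - x := by
    simpa [negMulLog_eq_neg] using negMulLog_le_one_sub_self hx0.le
  nlinarith

lemma neg_two_mul_mul_log_le {r u v : ℝ} (hr0 : 0 < r) (hr1 : r ≤ 1) :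
    -(2 * u * v * log r) ≤ u ^ 2 / r / 2 + 2 * (v ^ 2 * (1 - r ^ 2) / r) := by
  have hsq : v ^ 2 * (r * log r) ^ 2 ≤ v ^ 2 * (1 - r ^ 2) :=
    mul_le_mul_of_nonneg_left (sq_mul_log_le_one_sub_sq hr0 hr1) (sq_nonneg v)
  rw [div_div, mul_div_assoc', div_add_div _ _ (by positivity) hr0.ne',
    le_div_iff₀ (by positivity)]
  nlinarith [sq_nonneg (u + 2 * v * (r * log r))]

lemma ofReal_intervalIntegral_eq_lintegral_Ioo {f : ℝ → ℝ} {a b : ℝ} (hab : a ≤ b)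
    (hf : IntervalIntegrable f volume a b) (hf0 : ∀ x ∈ Ioo a b, 0 ≤ f x) :
    ENNReal.ofReal (∫ x in a..b, f x) = ∫⁻ x in Ioo a b, ENNReal.ofReal (f x) := by
  rw [intervalIntegral.integral_of_le hab, integral_Ioc_eq_integral_Ioo]
  exact ofReal_integral_eq_lintegral_ofReal
    ((intervalIntegrable_iff_integrableOn_Ioo_of_le hab).1 hf)
    ((ae_restrict_iff' measurableSet_Ioo).2 (ae_of_all _ hf0))

lemma tendsto_integral_nhdsGT_left {f : ℝ → ℝ} (hf : Continuous f) (a b : ℝ) :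
    Tendsto (fun ε => ∫ x in ε..b, f x) (𝓝[>] a) (𝓝 (∫ x in a..b, f x)) := by
  have hc : Continuous fun ε => -∫ x in b..ε, f x :=
    (intervalIntegral.continuous_primitive (fun _ _ => hf.intervalIntegrable _ _) b).neg
  simp only [← intervalIntegral.integral_symm] at hc
  exact (hc.tendsto a).mono_left nhdsWithin_le_nhds

section Hardy

variable {h : ℝ → ℝ} {a b : ℝ}

lemma integral_sq_div_eq_sub_integral_mul_log (hh : ContDiff ℝ 1 h) (ha : 0 < a) (hab : a ≤ b) :
    ∫ r in a..b, h r ^ 2 / r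
      = h b ^ 2 * log b - h a ^ 2 * log a - ∫ r in a..b, 2 * h r * deriv h r * log r := by
  have hpos : ∀ x ∈ uIcc a b, 0 < x := fun x hx => ha.trans_le (uIcc_of_le hab ▸ hx).1
  have hcont : ContinuousOn (fun r => 2 * h r * deriv h r * log r) (uIcc a b) :=
    ((continuous_const.mul hh.continuous).mul (hh.continuous_deriv le_rfl)).continuousOn.mul
      (continuousOn_log.mono fun x hx => (hpos x hx).ne')
  have hcont' : ContinuousOn (fun r => h r ^ 2 / r) (uIcc a b) :=
    (hh.continuous.pow 2).continuousOn.div continuousOn_id fun x hx => (hpos x hx).ne'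
  have hderiv : ∀ x ∈ uIcc a b, HasDerivAt (fun r => h r ^ 2 * log r)
      (2 * h x * deriv h x * log x + h x ^ 2 / x) x := fun x hx =>
    (((hh.differentiable one_ne_zero x).hasDerivAt.fun_pow 2).fun_mul
      (hasDerivAt_log (hpos x hx).ne')).congr_deriv (by norm_num [div_eq_mul_inv])
  have hibp := intervalIntegral.integral_eq_sub_of_hasDerivAt hderiv
    (hcont.intervalIntegrable.add hcont'.intervalIntegrable)
  rw [intervalIntegral.integral_add hcont.intervalIntegrable hcont'.intervalIntegrable] at hibp
  linarith

lemma integral_sq_div_le_of_contDiff (hh : ContDiff ℝ 1 h) (ha : 0 < a) (ha1 : a ≤ 1) :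
    ∫ r in a..1, h r ^ 2 / r
      ≤ 2 * (h a ^ 2 * -log a) + 4 * ∫ r in a..1, deriv h r ^ 2 * (1 - r ^ 2) / r := by
  have hpos : ∀ x ∈ uIcc a 1, 0 < x := fun x hx => ha.trans_le (uIcc_of_le ha1 ▸ hx).1
  have hsq : IntervalIntegrable (fun r => h r ^ 2 / r) volume a 1 :=
    ((hh.continuous.pow 2).continuousOn.div continuousOn_id
      fun x hx => (hpos x hx).ne').intervalIntegrable
  have hφ : IntervalIntegrable (fun r => deriv h r ^ 2 * (1 - r ^ 2) / r) volume a 1 :=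
    ((((hh.continuous_deriv le_rfl).pow 2).mul (continuous_const.sub (continuous_pow 2))
      ).continuousOn.div continuousOn_id fun x hx => (hpos x hx).ne').intervalIntegrable
  have hlog : IntervalIntegrable (fun r => 2 * h r * deriv h r * log r) volume a 1 :=
    (((continuous_const.mul hh.continuous).mul (hh.continuous_deriv le_rfl)).continuousOn.mul
      (continuousOn_log.mono fun x hx => (hpos x hx).ne')).intervalIntegrable
  have hamgm : ∫ r in a..1, -(2 * h r * deriv h r * log r)
      ≤ ∫ r in a..1, (h r ^ 2 / r / 2 + 2 * (deriv h r ^ 2 * (1 - r ^ 2) / r)) :=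
    intervalIntegral.integral_mono_on ha1 hlog.neg
      ((hsq.div_const 2).add (hφ.const_mul 2))
      fun r hr => neg_two_mul_mul_log_le (ha.trans_le hr.1) hr.2
  rw [intervalIntegral.integral_neg, intervalIntegral.integral_add (hsq.div_const 2)
    (hφ.const_mul 2), intervalIntegral.integral_div, intervalIntegral.integral_const_mul] at hamgm
  have hibp := integral_sq_div_eq_sub_integral_mul_log hh ha ha1
  rw [log_one, mul_zero, zero_sub] at hibp
  linarith

end Hardy

lemma tendsto_sq_mul_self_mul_neg_log {g : ℝ → ℝ} (hg : Continuous g) :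
    Tendsto (fun ε => (ε * g ε) ^ 2 * -log ε) (𝓝[>] 0) (𝓝 0) := by
  have hc : Continuous fun ε => -(g ε ^ 2 * ε * (ε * log ε)) :=
    ((hg.pow 2).mul continuous_id |>.mul continuous_mul_log).neg
  have := (hc.tendsto 0).mono_left (nhdsWithin_le_nhds (s := Ioi 0))
  simp only [zero_mul, mul_zero, neg_zero] at this
  exact this.congr fun ε => by ring

lemma ofReal_integral_sq_mul_le {g : ℝ → ℝ} (hg : ContDiff ℝ 1 g) {ε : ℝ} (hε0 : 0 < ε)
    (hε1 : ε ≤ 1) :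
    ENNReal.ofReal (∫ r in ε..1, |g r| ^ 2 * r)
      ≤ ENNReal.ofReal (2 * ((ε * g ε) ^ 2 * -log ε)) + 4 * ∫⁻ r in Ioo 0 1,
          ENNReal.ofReal (|deriv (fun s => s * g s) r| ^ 2 * (1 - r ^ 2) / r) := by
  set h : ℝ → ℝ := fun s => s * g s
  have hh : ContDiff ℝ 1 h := contDiff_id.mul hg
  have hpos : ∀ x ∈ uIcc ε 1, 0 < x := fun x hx => hε0.trans_le (uIcc_of_le hε1 ▸ hx).1
  have hgh : ∫ r in ε..1, g r ^ 2 * r = ∫ r in ε..1, h r ^ 2 / r :=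
    intervalIntegral.integral_congr fun r hr => by
      have := (hpos r hr).ne'
      simp only [h]
      field_simp
  have hK : ENNReal.ofReal (∫ r in ε..1, |deriv h r| ^ 2 * (1 - r ^ 2) / r)
      ≤ ∫⁻ r in Ioo 0 1, ENNReal.ofReal (|deriv h r| ^ 2 * (1 - r ^ 2) / r) := by
    have hint : IntervalIntegrable (fun r => |deriv h r| ^ 2 * (1 - r ^ 2) / r) volume ε 1 :=
      ((((hh.continuous_deriv le_rfl).abs.pow 2).mul (continuous_const.sub (continuous_pow 2))
        ).continuousOn.div continuousOn_id fun x hx => (hpos x hx).ne').intervalIntegrable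
    rw [ofReal_intervalIntegral_eq_lintegral_Ioo hε1 hint fun r hr => by
      have : 0 ≤ 1 - r ^ 2 := by nlinarith [hr.1, hr.2]
      have := hε0.trans hr.1
      positivity]
    exact lintegral_mono_set (Ioo_subset_Ioo_left hε0.le)
  calc ENNReal.ofReal (∫ r in ε..1, |g r| ^ 2 * r)
      ≤ ENNReal.ofReal (2 * (h ε ^ 2 * -log ε)
          + 4 * ∫ r in ε..1, |deriv h r| ^ 2 * (1 - r ^ 2) / r) := by
        simp only [sq_abs, hgh]
        exact ENNReal.ofReal_le_ofReal (integral_sq_div_le_of_contDiff hh hε0 hε1)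
    _ ≤ ENNReal.ofReal (2 * (h ε ^ 2 * -log ε))
          + 4 * ENNReal.ofReal (∫ r in ε..1, |deriv h r| ^ 2 * (1 - r ^ 2) / r) := by
        rw [← ENNReal.ofReal_ofNat 4, ← ENNReal.ofReal_mul (by norm_num)]
        exact ENNReal.ofReal_add_le
    _ ≤ _ := by gcongr

/-- There is `C > 0` such that for every `g ∈ C¹([0,1])` with `g(0)=0`,
`∫₀¹ |g|² r dr ≤ C ∫₀¹ |(d/dr)(rg)|² (1−r²)/r dr` (RHS may be `+∞`). -/
theorem stmt3 :
    ∃ C : ℝ, 0 < C ∧ ∀ g : ℝ → ℝ, ContDiff ℝ 1 g → g 0 = 0 →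
      (∫⁻ r in Ioo (0:ℝ) 1, ENNReal.ofReal (|g r| ^ 2 * r))
        ≤ ENNReal.ofReal C * ∫⁻ r in Ioo (0:ℝ) 1,
            ENNReal.ofReal (|deriv (fun s => s * g s) r| ^ 2 * (1 - r ^ 2) / r) := by
  refine ⟨4, four_pos, fun g hg _ => ?_⟩
  have hf : Continuous fun r => |g r| ^ 2 * r := (hg.continuous.abs.pow 2).mul continuous_id
  rw [← ofReal_intervalIntegral_eq_lintegral_Ioo zero_le_one (hf.intervalIntegrable 0 1)
    fun r hr => mul_nonneg (sq_nonneg _) hr.1.le, ENNReal.ofReal_ofNat]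
  refine le_of_tendsto_of_tendsto (ENNReal.tendsto_ofReal (tendsto_integral_nhdsGT_left hf 0 1))
    ?_ (eventually_of_mem (Ioo_mem_nhdsGT one_pos) fun ε hε =>
      ofReal_integral_sq_mul_le hg hε.1 hε.2.le)
  simpa only [mul_zero, ENNReal.ofReal_zero, zero_add] using (ENNReal.tendsto_ofReal
    ((tendsto_sq_mul_self_mul_neg_log hg.continuous).const_mul 2)).add tendsto_const_nhds
end

section
/- There exists a constant C > 0 such that for every g ∈ C²([0,1], ℝ), one has ∫₀¹ |g(r)|² r dr ≤ C (∫₀¹ (1 − r²)|g(r)|² r dr)^{2/3} (∫₀¹ |(d/dr)(r g(r))|² (1/r) dr)^{1/3} + C ∫₀¹ (1 − r²)|g(r)|² r dr (quantities on the right may be +∞). -/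
/-!
Put `u = r g` and `a = ∫ (1 - r²) g² r`. On `(0, 1 - δ)` the weight `1 - r²` is at least `δ`,
so there `∫ g² r ≤ a / δ`. Near `r = 1` we have `g² r ≤ 2 u²`, and a one-dimensional
Poincaré argument (start from the minimum of `u²` on `[1 - 2δ, 1 - δ]` and integrate
`(u²)' = 2 u u' ≤ u² / (2δ) + 2δ u'²`) bounds `∫_{1-δ}^1 u²` by
`3 ∫_{1-2δ}^{1-δ} u² + 4δ² ∫ u'²`, where again `∫_{1-2δ}^{1-δ} u² ≤ a / δ`.
Altogether `∫ g² r ≤ 7 a / δ + 8 δ² b` for every `δ ≤ 1/4`, with `b = ∫ u'² / r`, and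
`δ = (a / b)^{1/3}` (or `δ = 1/4` when `b ≤ 64 a`) gives the claim with `C = 60`.
-/

open MeasureTheory Set

lemma two_mul_mul_le_sq_div_add_mul_sq {ε : ℝ} (hε : 0 < ε) (x y : ℝ) :
    2 * x * y ≤ x ^ 2 / ε + ε * y ^ 2 := by
  rw [div_add' _ _ _ hε.ne', le_div_iff₀ hε]
  nlinarith [sq_nonneg (x - ε * y)]

lemma sq_le_sq_add_intervalIntegral {u : ℝ → ℝ} (hu : ContDiff ℝ 1 u) {s r ε : ℝ}
    (hsr : s ≤ r) (hε : 0 < ε) :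
    u r ^ 2 ≤ u s ^ 2 + ∫ t in s..r, (u t ^ 2 / ε + ε * deriv u t ^ 2) := by
  have hu' : Continuous (deriv u) := hu.continuous_deriv le_rfl
  have hu₁ : Differentiable ℝ u := hu.differentiable one_ne_zero
  have hftc : ∫ t in s..r, 2 * u t * deriv u t = u r ^ 2 - u s ^ 2 := by
    apply intervalIntegral.integral_eq_sub_of_hasDerivAt
    · intro t _
      simpa [mul_comm] using (hu₁ t).hasDerivAt.fun_pow 2
    · exact (continuous_const.mul hu.continuous |>.mul hu').intervalIntegrable _ _
  have hamgm : ∫ t in s..r, 2 * u t * deriv u t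
      ≤ ∫ t in s..r, (u t ^ 2 / ε + ε * deriv u t ^ 2) :=
    intervalIntegral.integral_mono_on hsr ((by fun_prop : Continuous _).intervalIntegrable _ _)
      ((by fun_prop : Continuous _).intervalIntegrable _ _)
      fun t _ => two_mul_mul_le_sq_div_add_mul_sq hε _ _
  linarith

lemma intervalIntegral_sq_le_of_adjacent {u : ℝ → ℝ} (hu : ContDiff ℝ 1 u) {c δ : ℝ}
    (hδ : 0 < δ) :
    ∫ r in (c - δ)..c, u r ^ 2
      ≤ 3 * (∫ r in (c - 2 * δ)..(c - δ), u r ^ 2)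
        + 4 * δ ^ 2 * ∫ r in (c - 2 * δ)..c, deriv u r ^ 2 := by
  have hu₀ : Continuous fun r => u r ^ 2 := hu.continuous.pow 2
  have hu' : Continuous fun r => deriv u r ^ 2 := (hu.continuous_deriv le_rfl).pow 2
  set I₀ := ∫ r in (c - 2 * δ)..(c - δ), u r ^ 2
  set I₁ := ∫ r in (c - δ)..c, u r ^ 2
  set J := ∫ r in (c - 2 * δ)..c, deriv u r ^ 2
  obtain ⟨s, ⟨hs₁, hs₂⟩, hmin⟩ := isCompact_Icc.exists_isMinOn
    (nonempty_Icc.mpr (by linarith : c - 2 * δ ≤ c - δ)) hu₀.continuousOn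
  have hmin_le : δ * u s ^ 2 ≤ I₀ := by
    have := intervalIntegral.integral_mono_on (μ := volume) (by linarith)
      (continuous_const.intervalIntegrable _ _) (hu₀.intervalIntegrable _ _) fun r hr => hmin hr
    simpa [intervalIntegral.integral_const, show c - δ - (c - 2 * δ) = δ by ring] using this
  have hsplit : I₀ + I₁ = ∫ r in (c - 2 * δ)..c, u r ^ 2 :=
    intervalIntegral.integral_add_adjacent_intervals (hu₀.intervalIntegrable _ _)
      (hu₀.intervalIntegrable _ _)
  have hwide : ∫ t in (c - 2 * δ)..c, (u t ^ 2 / (2 * δ) + 2 * δ * deriv u t ^ 2)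
      = (I₀ + I₁) / (2 * δ) + 2 * δ * J := by
    rw [intervalIntegral.integral_add ((hu₀.div_const _).intervalIntegrable _ _)
      ((hu'.const_mul _).intervalIntegrable _ _), intervalIntegral.integral_div,
      intervalIntegral.integral_const_mul, hsplit]
  have hpoint : ∀ r ∈ Icc (c - δ) c,
      u r ^ 2 ≤ u s ^ 2 + ((I₀ + I₁) / (2 * δ) + 2 * δ * J) := by
    intro r ⟨hr₁, hr₂⟩
    rw [← hwide]
    refine (sq_le_sq_add_intervalIntegral (ε := 2 * δ) hu (hs₂.trans hr₁)
      (by positivity)).trans ?_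
    gcongr 1
    exact intervalIntegral.integral_mono_interval hs₁ (hs₂.trans hr₁) hr₂
      (Filter.Eventually.of_forall fun t => by positivity)
      (((hu₀.div_const _).fun_add (hu'.const_mul _)).intervalIntegrable _ _)
  have hI₁ : I₁ ≤ δ * (u s ^ 2 + ((I₀ + I₁) / (2 * δ) + 2 * δ * J)) := by
    have := intervalIntegral.integral_mono_on (μ := volume) (by linarith)
      (hu₀.intervalIntegrable _ _) (continuous_const.intervalIntegrable _ _) hpoint
    rwa [intervalIntegral.integral_const, smul_eq_mul, show c - (c - δ) = δ by ring] at this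
  have hexpand : δ * (u s ^ 2 + ((I₀ + I₁) / (2 * δ) + 2 * δ * J))
      = δ * u s ^ 2 + (I₀ + I₁) / 2 + 2 * δ ^ 2 * J := by
    field_simp; ring
  linarith

lemma intervalIntegral_sq_mul_le {g : ℝ → ℝ} (hg : ContDiff ℝ 1 g) {δ : ℝ}
    (hδ : 0 < δ) (hδ' : δ ≤ 1 / 4) :
    ∫ r in (0 : ℝ)..1, g r ^ 2 * r
      ≤ 7 / δ * (∫ r in (0 : ℝ)..1, (1 - r ^ 2) * g r ^ 2 * r)
        + 8 * δ ^ 2 * ∫ r in (1 - 2 * δ)..1, deriv (fun s => s * g s) r ^ 2 := by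
  set u : ℝ → ℝ := fun s => s * g s
  have hu : ContDiff ℝ 1 u := contDiff_id.mul hg
  have hu₀ : Continuous fun r => u r ^ 2 := hu.continuous.pow 2
  have hw : Continuous fun r : ℝ => (1 - r ^ 2) * g r ^ 2 * r := by fun_prop
  have hm : Continuous fun r : ℝ => g r ^ 2 * r := by fun_prop
  set a := ∫ r in (0 : ℝ)..1, (1 - r ^ 2) * g r ^ 2 * r
  have hw_le : ∀ c d : ℝ, 0 ≤ c → c ≤ d → d ≤ 1 →
      ∫ r in c..d, (1 - r ^ 2) * g r ^ 2 * r ≤ a := fun c d hc hcd hd =>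
    intervalIntegral.integral_mono_interval hc hcd hd
      (ae_restrict_of_forall_mem measurableSet_Ioc fun r ⟨hr₀, hr₁⟩ =>
        mul_nonneg (mul_nonneg (by nlinarith) (sq_nonneg _)) hr₀.le)
      (hw.intervalIntegrable _ _)
  have hlow : ∫ r in (0 : ℝ)..(1 - δ), g r ^ 2 * r ≤ a / δ := calc
    _ ≤ ∫ r in (0 : ℝ)..(1 - δ), (1 - r ^ 2) * g r ^ 2 * r / δ := by
        refine intervalIntegral.integral_mono_on (by linarith) (hm.intervalIntegrable _ _)
          ((hw.div_const _).intervalIntegrable _ _) fun r ⟨hr₀, hr₁⟩ => ?_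
        have : 0 ≤ (1 - r ^ 2 - δ) * (g r ^ 2 * r) := mul_nonneg (by nlinarith) (by positivity)
        rw [le_div_iff₀ hδ]
        linarith
    _ ≤ a / δ := by
        rw [intervalIntegral.integral_div]
        gcongr
        exact hw_le 0 (1 - δ) le_rfl (by linarith) (by linarith)
  have hmid : ∫ r in (1 - 2 * δ)..(1 - δ), u r ^ 2 ≤ a / δ := calc
    _ ≤ ∫ r in (1 - 2 * δ)..(1 - δ), (1 - r ^ 2) * g r ^ 2 * r / δ := by
        refine intervalIntegral.integral_mono_on (by linarith) (hu₀.intervalIntegrable _ _)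
          ((hw.div_const _).intervalIntegrable _ _) fun r ⟨hr₀, hr₁⟩ => ?_
        have : 0 ≤ (1 - r ^ 2 - r * δ) * (g r ^ 2 * r) :=
          mul_nonneg (by nlinarith) (mul_nonneg (sq_nonneg _) (by linarith))
        rw [le_div_iff₀ hδ]
        simp only [u]
        linarith
    _ ≤ a / δ := by
        rw [intervalIntegral.integral_div]
        gcongr
        exact hw_le _ _ (by linarith) (by linarith) (by linarith)
  have hhigh : ∫ r in (1 - δ)..1, g r ^ 2 * r ≤ 2 * ∫ r in (1 - δ)..1, u r ^ 2 := calc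
    _ ≤ ∫ r in (1 - δ)..1, 2 * u r ^ 2 := by
        refine intervalIntegral.integral_mono_on (by linarith) (hm.intervalIntegrable _ _)
          ((hu₀.const_mul _).intervalIntegrable _ _) fun r ⟨hr₀, hr₁⟩ => ?_
        have : 0 ≤ r * (2 * r - 1) * g r ^ 2 :=
          mul_nonneg (mul_nonneg (by linarith) (by linarith)) (sq_nonneg _)
        simp only [u]
        linarith
    _ = _ := intervalIntegral.integral_const_mul _ _
  have hsplit := intervalIntegral.integral_add_adjacent_intervals (μ := volume)
    (hm.intervalIntegrable 0 (1 - δ)) (hm.intervalIntegrable (1 - δ) 1)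
  have hend := intervalIntegral_sq_le_of_adjacent hu (c := 1) hδ
  rw [div_mul_eq_mul_div, mul_div_assoc]
  linarith

lemma ofReal_intervalIntegral_eq_setLIntegral_Ioo {f : ℝ → ℝ} (hf : Continuous f) {a b : ℝ}
    (hab : a ≤ b) (hf₀ : ∀ x ∈ Ioo a b, 0 ≤ f x) :
    ENNReal.ofReal (∫ x in a..b, f x) = ∫⁻ x in Ioo a b, ENNReal.ofReal (f x) := by
  rw [intervalIntegral.integral_of_le hab, integral_Ioc_eq_integral_Ioo,
    ofReal_integral_eq_lintegral_ofReal (hf.integrableOn_Icc.mono_set Ioo_subset_Icc_self)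
      (ae_restrict_of_forall_mem measurableSet_Ioo hf₀)]

lemma lintegral_sq_mul_le {g : ℝ → ℝ} (hg : ContDiff ℝ 1 g) {δ : ℝ}
    (hδ : 0 < δ) (hδ' : δ ≤ 1 / 4) :
    ∫⁻ r in Ioo (0 : ℝ) 1, ENNReal.ofReal (g r ^ 2 * r)
      ≤ ENNReal.ofReal (7 / δ)
          * (∫⁻ r in Ioo (0 : ℝ) 1, ENNReal.ofReal ((1 - r ^ 2) * g r ^ 2 * r))
        + ENNReal.ofReal (8 * δ ^ 2)
          * ∫⁻ r in Ioo (0 : ℝ) 1, ENNReal.ofReal (deriv (fun s => s * g s) r ^ 2 / r) := by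
  have hu' : Continuous fun r => deriv (fun s => s * g s) r ^ 2 :=
    ((contDiff_id.mul hg).continuous_deriv le_rfl).pow 2
  set J := ∫ r in (1 - 2 * δ)..1, deriv (fun s => s * g s) r ^ 2
  have hJ : ENNReal.ofReal J
      ≤ ∫⁻ r in Ioo (0 : ℝ) 1, ENNReal.ofReal (deriv (fun s => s * g s) r ^ 2 / r) := calc
    _ = ∫⁻ r in Ioo (1 - 2 * δ) 1, ENNReal.ofReal (deriv (fun s => s * g s) r ^ 2) :=
        ofReal_intervalIntegral_eq_setLIntegral_Ioo hu' (by linarith) fun r _ => sq_nonneg _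
    _ ≤ ∫⁻ r in Ioo (1 - 2 * δ) 1, ENNReal.ofReal (deriv (fun s => s * g s) r ^ 2 / r) :=
        setLIntegral_mono' measurableSet_Ioo fun r ⟨hr₀, hr₁⟩ =>
          ENNReal.ofReal_le_ofReal (le_div_self (sq_nonneg _) (by linarith) hr₁.le)
    _ ≤ _ := lintegral_mono_set (Ioo_subset_Ioo_left (by linarith))
  rw [← ofReal_intervalIntegral_eq_setLIntegral_Ioo (by fun_prop) zero_le_one
      fun r hr => mul_nonneg (sq_nonneg _) hr.1.le,
    ← ofReal_intervalIntegral_eq_setLIntegral_Ioo (by fun_prop) zero_le_one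
      fun r ⟨hr₀, hr₁⟩ => mul_nonneg (mul_nonneg (by nlinarith) (sq_nonneg _)) hr₀.le]
  calc _ ≤ ENNReal.ofReal (7 / δ * (∫ r in (0 : ℝ)..1, (1 - r ^ 2) * g r ^ 2 * r)
          + 8 * δ ^ 2 * J) :=
        ENNReal.ofReal_le_ofReal (intervalIntegral_sq_mul_le hg hδ hδ')
    _ ≤ ENNReal.ofReal (7 / δ)
            * ENNReal.ofReal (∫ r in (0 : ℝ)..1, (1 - r ^ 2) * g r ^ 2 * r)
          + ENNReal.ofReal (8 * δ ^ 2) * ENNReal.ofReal J := by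
        rw [← ENNReal.ofReal_mul (by positivity), ← ENNReal.ofReal_mul (by positivity)]
        exact ENNReal.ofReal_add_le
    _ ≤ _ := by gcongr

lemma lintegral_sq_mul_eq_zero_of_weighted {g : ℝ → ℝ} (hg : Continuous g)
    (h : ∫⁻ r in Ioo (0 : ℝ) 1, ENNReal.ofReal ((1 - r ^ 2) * g r ^ 2 * r) = 0) :
    ∫⁻ r in Ioo (0 : ℝ) 1, ENNReal.ofReal (g r ^ 2 * r) = 0 := by
  rw [lintegral_eq_zero_iff' (by fun_prop)] at h ⊢
  filter_upwards [h, ae_restrict_mem measurableSet_Ioo] with r hr ⟨hr₀, hr₁⟩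
  simp only [Pi.zero_apply, ENNReal.ofReal_eq_zero] at hr ⊢
  have : 0 < 1 - r ^ 2 := by nlinarith
  nlinarith [mul_nonneg (sq_nonneg (g r)) hr₀.le]

lemma le_of_forall_le_div_mul_add_sq_mul {L a b : ℝ} (ha : 0 < a) (hb : 0 ≤ b)
    (h : ∀ δ : ℝ, 0 < δ → δ ≤ 1 / 4 → L ≤ 7 / δ * a + 8 * δ ^ 2 * b) :
    L ≤ 60 * a ^ (2 / 3 : ℝ) * b ^ (1 / 3 : ℝ) + 60 * a := by
  set p := a ^ (1 / 3 : ℝ)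
  set q := b ^ (1 / 3 : ℝ)
  have hp : 0 < p := by positivity
  have hq : 0 ≤ q := by positivity
  have hp₃ : p ^ 3 = a := by
    rw [← Real.rpow_natCast, ← Real.rpow_mul ha.le]; norm_num
  have hq₃ : q ^ 3 = b := by
    rw [← Real.rpow_natCast, ← Real.rpow_mul hb]; norm_num
  have hp₂ : a ^ (2 / 3 : ℝ) = p ^ 2 := by
    rw [show (2 / 3 : ℝ) = 1 / 3 * (2 : ℕ) by norm_num, Real.rpow_mul ha.le, Real.rpow_natCast]
  rw [hp₂, ← hp₃]
  by_cases hqp : q ≤ 4 * p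
  · have hL := h (1 / 4) (by norm_num) le_rfl
    have : q ^ 3 ≤ (4 * p) ^ 3 := pow_le_pow_left₀ hq hqp 3
    nlinarith [mul_nonneg (sq_nonneg p) hq]
  · have hq' : 0 < q := by linarith
    have hL := h (p / q) (by positivity) (by rw [div_le_iff₀ hq']; linarith)
    rw [← hp₃, ← hq₃] at hL
    have hbal : 7 / (p / q) * p ^ 3 + 8 * (p / q) ^ 2 * q ^ 3 = 15 * p ^ 2 * q := by
      field_simp; ring
    nlinarith [mul_nonneg (sq_nonneg p) hq]

lemma ENNReal.le_of_forall_le_mul_add_mul {L A B : ENNReal} (hA : A = 0 → L = 0)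
    (h : ∀ δ : ℝ, 0 < δ → δ ≤ 1 / 4 →
      L ≤ ENNReal.ofReal (7 / δ) * A + ENNReal.ofReal (8 * δ ^ 2) * B) :
    L ≤ ENNReal.ofReal 60 * A ^ (2 / 3 : ℝ) * B ^ (1 / 3 : ℝ) + ENNReal.ofReal 60 * A := by
  rcases eq_or_ne A 0 with rfl | hA₀
  · simp [hA rfl]
  rcases eq_or_ne A ⊤ with rfl | hA_top
  · simp
  rcases eq_or_ne B ⊤ with rfl | hB_top
  · simp [hA₀, hA_top]
  have hL_top : L ≠ ⊤ := ne_top_of_le_ne_top (by finiteness) (h (1 / 4) (by norm_num) le_rfl)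
  have key := le_of_forall_le_div_mul_add_sq_mul (L := L.toReal)
    (ENNReal.toReal_pos hA₀ hA_top) ENNReal.toReal_nonneg fun δ hδ hδ' => by
      have := ENNReal.toReal_mono (by finiteness) (h δ hδ hδ')
      rwa [ENNReal.toReal_add (by finiteness) (by finiteness), ENNReal.toReal_mul,
        ENNReal.toReal_mul, ENNReal.toReal_ofReal (by positivity),
        ENNReal.toReal_ofReal (by positivity)] at this
  rw [← ENNReal.ofReal_toReal hL_top, ← ENNReal.ofReal_toReal hA_top,
    ← ENNReal.ofReal_toReal hB_top, ENNReal.ofReal_rpow_of_nonneg ENNReal.toReal_nonneg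
      (by norm_num), ENNReal.ofReal_rpow_of_nonneg ENNReal.toReal_nonneg (by norm_num),
    ← ENNReal.ofReal_mul (by norm_num), ← ENNReal.ofReal_mul (by positivity),
    ← ENNReal.ofReal_mul (by norm_num), ← ENNReal.ofReal_add (by positivity) (by positivity)]
  exact ENNReal.ofReal_le_ofReal key

/-- There is `C > 0` such that for every `g ∈ C²([0,1])`,
`∫₀¹ |g|² r dr ≤ C (∫₀¹ (1−r²)|g|² r dr)^{2/3} (∫₀¹ |(d/dr)(rg)|² (1/r) dr)^{1/3}
  + C ∫₀¹ (1−r²)|g|² r dr` (quantities on the right may be `+∞`). -/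
theorem stmt4 :
    ∃ C : ℝ, 0 < C ∧ ∀ g : ℝ → ℝ, ContDiff ℝ 2 g →
      (∫⁻ r in Ioo (0:ℝ) 1, ENNReal.ofReal (|g r| ^ 2 * r))
        ≤ ENNReal.ofReal C
            * (∫⁻ r in Ioo (0:ℝ) 1,
                ENNReal.ofReal ((1 - r ^ 2) * |g r| ^ 2 * r)) ^ ((2:ℝ)/3)
            * (∫⁻ r in Ioo (0:ℝ) 1,
                ENNReal.ofReal (|deriv (fun s => s * g s) r| ^ 2 / r)) ^ ((1:ℝ)/3)
          + ENNReal.ofReal C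
            * ∫⁻ r in Ioo (0:ℝ) 1,
                ENNReal.ofReal ((1 - r ^ 2) * |g r| ^ 2 * r) := by
  refine ⟨60, by norm_num, fun g hg => ?_⟩
  simp only [sq_abs]
  exact ENNReal.le_of_forall_le_mul_add_mul (lintegral_sq_mul_eq_zero_of_weighted hg.continuous)
    fun δ hδ hδ' => lintegral_sq_mul_le (hg.of_le (by norm_num)) hδ hδ'
end

section
/- There exists a constant C > 0 such that for every g ∈ C²([0,1], ℝ), one has ∫₀¹ |(d/dr)(r g(r))|² (1/r) dr ≤ C (∫₀¹ |(d/dr)(r g(r))|² (1 − r²)/r dr)^{2/3} (∫₀¹ |(Lg)(r)|² r dr)^{1/3} + C ∫₀¹ |(d/dr)(r g(r))|² (1 − r²)/r dr (quantities may be +∞). -/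
/-!
Write `h = (r g)'`, so that `h' = r · L g + h / r`. On `(0, 1/2]` the weight `1/r` is comparable
to `(1 - r²)/r`, so only `S = ∫_{1/2}^1 h²` needs work, and there `(1 - r²)/r ≥ 1 - r`.
Splitting at `1 - δ` gives `S ≤ B/δ + δ · sup h²` with `B = ∫_{1/2}^1 h² (1 - r)`; the supremum is
at most the minimum of `h²` on `[1/2, 3/4]` (itself `≤ 16 B`) plus `∫ |2 h h'|`, and `h'` is
controlled by `L g` and `h`. This yields `S ≲ B/δ + B + δ² D` with `D = ∫_{1/2}^1 (L g)² r`
for every small `δ`, and `δ = (B/D)^{1/3}` turns it into `S ≲ B^{2/3} D^{1/3} + B`.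
-/

open MeasureTheory Set

open Filter Topology

lemma le_of_forall_le_div_add_sq_mul {S u v : ℝ} (hu : 0 ≤ u) (hv : 0 ≤ v)
    (H : ∀ δ : ℝ, 0 < δ → δ ≤ 1 / 12 → S ≤ 2 * u ^ 3 / δ + 16 * u ^ 3 + 16 * δ ^ 2 * v ^ 3) :
    S ≤ 18 * u ^ 2 * v + 232 * u ^ 3 := by
  rcases le_or_gt v (12 * u) with hvu | hvu
  · have h := H (1 / 12) (by norm_num) le_rfl
    have hv3 : v ^ 3 ≤ 144 * u ^ 2 * v := by
      nlinarith [mul_le_mul hvu hvu hv (by positivity), mul_nonneg hv hv]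
    nlinarith [mul_nonneg (mul_nonneg hu hu) hv]
  rcases hu.eq_or_lt with rfl | hu
  · have hlim : Tendsto (fun δ : ℝ => 16 * δ ^ 2 * v ^ 3) (𝓝[>] 0) (𝓝 0) := by
      have : Continuous (fun δ : ℝ => 16 * δ ^ 2 * v ^ 3) := by fun_prop
      simpa using (this.tendsto 0).mono_left nhdsWithin_le_nhds
    have hS : S ≤ 0 := ge_of_tendsto hlim <| by
      filter_upwards [Ioo_mem_nhdsGT (show (0 : ℝ) < 1 / 12 by norm_num)] with δ hδ
      simpa using H δ hδ.1 hδ.2.le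
    simpa using hS
  · have hv0 : 0 < v := by linarith
    have h := H (u / v) (by positivity) (by rw [div_le_iff₀ hv0]; linarith)
    have e1 : 2 * u ^ 3 / (u / v) = 2 * u ^ 2 * v := by field_simp
    have e2 : 16 * (u / v) ^ 2 * v ^ 3 = 16 * u ^ 2 * v := by field_simp
    nlinarith [pow_pos hu 3]

lemma le_rpow_mul_rpow_add_of_forall {S B D : ℝ} (hB : 0 ≤ B) (hD : 0 ≤ D)
    (H : ∀ δ : ℝ, 0 < δ → δ ≤ 1 / 12 → S ≤ 2 * B / δ + 16 * B + 16 * δ ^ 2 * D) :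
    S ≤ 18 * B ^ (2 / 3 : ℝ) * D ^ (1 / 3 : ℝ) + 232 * B := by
  have rpow_pow : ∀ {x : ℝ} (n : ℕ), 0 ≤ x → (x ^ (1 / 3 : ℝ)) ^ n = x ^ (n / 3 : ℝ) :=
    fun n hx => by rw [← Real.rpow_natCast, ← Real.rpow_mul hx]; ring_nf
  have cube : ∀ {x : ℝ}, 0 ≤ x → (x ^ (1 / 3 : ℝ)) ^ 3 = x := fun hx => by
    rw [rpow_pow 3 hx]; norm_num
  have h := le_of_forall_le_div_add_sq_mul (S := S) (Real.rpow_nonneg hB (1 / 3))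
    (Real.rpow_nonneg hD (1 / 3)) (by simpa only [cube hB, cube hD] using H)
  rwa [rpow_pow 2 hB, cube hB, Nat.cast_ofNat] at h

lemma abs_sub_le_integral_abs_deriv {f : ℝ → ℝ} (hf : ContDiff ℝ 1 f) {a b x y : ℝ}
    (hx : x ∈ Icc a b) (hy : y ∈ Icc a b) : |f y - f x| ≤ ∫ t in a..b, |deriv f t| := by
  wlog hxy : x ≤ y generalizing x y
  · rw [abs_sub_comm]; exact this hy hx (le_of_not_ge hxy)
  have hcont : Continuous (deriv f) := hf.continuous_deriv le_rfl
  rw [← intervalIntegral.integral_deriv_eq_sub (fun t _ => hf.differentiable one_ne_zero t)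
    (hcont.intervalIntegrable _ _)]
  calc |∫ t in x..y, deriv f t| ≤ ∫ t in x..y, |deriv f t| :=
        intervalIntegral.abs_integral_le_integral_abs hxy
    _ ≤ ∫ t in a..b, |deriv f t| :=
        intervalIntegral.integral_mono_interval hx.1 hxy hy.2
          (Eventually.of_forall fun _ => abs_nonneg _) (hcont.abs.intervalIntegrable _ _)

lemma integral_le_div_add_mul {f : ℝ → ℝ} (hf : Continuous f) {a b δ M : ℝ}
    (hf0 : ∀ x ∈ Icc a b, 0 ≤ f x) (hM : ∀ x ∈ Icc a b, f x ≤ M) (hδ : 0 < δ) (hδb : δ ≤ b - a) :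
    ∫ x in a..b, f x ≤ (∫ x in a..b, f x * (b - x)) / δ + δ * M := by
  have hfw : Continuous fun x => f x * (b - x) := by fun_prop
  rw [← intervalIntegral.integral_add_adjacent_intervals (b := b - δ) (hf.intervalIntegrable _ _)
    (hf.intervalIntegrable _ _)]
  have away : ∫ x in a..b - δ, f x ≤ (∫ x in a..b, f x * (b - x)) / δ := by
    calc ∫ x in a..b - δ, f x ≤ ∫ x in a..b - δ, f x * (b - x) / δ := by
          refine intervalIntegral.integral_mono_on (by linarith) (hf.intervalIntegrable _ _)
            ((hfw.div_const δ).intervalIntegrable _ _) fun x hx => ?_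
          rw [le_div_iff₀ hδ]
          exact mul_le_mul_of_nonneg_left (by linarith [hx.2]) (hf0 x ⟨hx.1, by linarith [hx.2]⟩)
      _ = (∫ x in a..b - δ, f x * (b - x)) / δ := intervalIntegral.integral_div _ _
      _ ≤ (∫ x in a..b, f x * (b - x)) / δ := by
          gcongr
          refine intervalIntegral.integral_mono_interval le_rfl (by linarith) (by linarith) ?_
            (hfw.intervalIntegrable _ _)
          filter_upwards [ae_restrict_mem measurableSet_Ioc] with x hx
          exact mul_nonneg (hf0 x (Ioc_subset_Icc_self hx)) (by linarith [hx.2])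
  have near : ∫ x in b - δ..b, f x ≤ δ * M := by
    calc ∫ x in b - δ..b, f x ≤ ∫ _ in b - δ..b, M :=
          intervalIntegral.integral_mono_on (by linarith) (hf.intervalIntegrable _ _)
            intervalIntegrable_const fun x hx => hM x ⟨by linarith [hx.1], hx.2⟩
      _ = δ * M := by simp
  linarith

lemma sq_le_integral_sq_mul_one_sub_add {h : ℝ → ℝ} (hh : ContDiff ℝ 1 h) {t r : ℝ} (ht : 0 < t)
    (hr : r ∈ Icc (1 / 2 : ℝ) 1) :
    h r ^ 2 ≤ 16 * (∫ x in (1 / 2 : ℝ)..1, h x ^ 2 * (1 - x))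
      + (∫ x in (1 / 2 : ℝ)..1, h x ^ 2) / t + t * ∫ x in (1 / 2 : ℝ)..1, deriv h x ^ 2 := by
  have hc : Continuous h := hh.continuous
  have hc' : Continuous (deriv h) := hh.continuous_deriv le_rfl
  obtain ⟨s, hs, hmin⟩ := (isCompact_Icc (a := (1 / 2 : ℝ)) (b := 3 / 4)).exists_isMinOn
    (nonempty_Icc.2 (by norm_num)) (hc.pow 2).continuousOn
  have hmin_le : h s ^ 2 ≤ 16 * ∫ x in (1 / 2 : ℝ)..1, h x ^ 2 * (1 - x) := by
    calc h s ^ 2 = 16 * ∫ _ in (1 / 2 : ℝ)..3 / 4, h s ^ 2 / 4 := by simp; ring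
      _ ≤ 16 * ∫ x in (1 / 2 : ℝ)..3 / 4, h x ^ 2 * (1 - x) := by
          gcongr
          refine intervalIntegral.integral_mono_on (by norm_num) intervalIntegrable_const
            (Continuous.intervalIntegrable (by fun_prop) _ _) fun x hx => ?_
          have hsx : h s ^ 2 ≤ h x ^ 2 := hmin hx
          nlinarith [hx.2]
      _ ≤ 16 * ∫ x in (1 / 2 : ℝ)..1, h x ^ 2 * (1 - x) := by
          gcongr
          refine intervalIntegral.integral_mono_interval le_rfl (by norm_num) (by norm_num) ?_
            (Continuous.intervalIntegrable (by fun_prop) _ _)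
          filter_upwards [ae_restrict_mem measurableSet_Ioc] with x hx
          exact mul_nonneg (sq_nonneg _) (by linarith [hx.2])
  have hderiv : deriv (fun x => h x ^ 2) = fun x => 2 * h x * deriv h x := by
    ext x; simp [(hh.differentiable one_ne_zero x)]
  have amgm : ∀ a b : ℝ, |2 * a * b| ≤ a ^ 2 / t + t * b ^ 2 := fun a b => by
    rw [show a ^ 2 / t + t * b ^ 2 = (a ^ 2 + (t * b) ^ 2) / t by field_simp, abs_le,
      neg_le, le_div_iff₀ ht, le_div_iff₀ ht]
    constructor <;> nlinarith [sq_nonneg (a - t * b), sq_nonneg (a + t * b)]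
  have hvar : |h r ^ 2 - h s ^ 2| ≤ (∫ x in (1 / 2 : ℝ)..1, h x ^ 2) / t
      + t * ∫ x in (1 / 2 : ℝ)..1, deriv h x ^ 2 := by
    calc |h r ^ 2 - h s ^ 2| ≤ ∫ x in (1 / 2 : ℝ)..1, |deriv (fun x => h x ^ 2) x| :=
          abs_sub_le_integral_abs_deriv (hh.pow 2) ⟨hs.1, by linarith [hs.2]⟩ hr
      _ ≤ ∫ x in (1 / 2 : ℝ)..1, (h x ^ 2 / t + t * deriv h x ^ 2) := by
          rw [hderiv]
          exact intervalIntegral.integral_mono_on (by norm_num)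
            (Continuous.intervalIntegrable (by fun_prop) _ _)
            (Continuous.intervalIntegrable (by fun_prop) _ _) fun x _ => amgm _ _
      _ = _ := by
          rw [intervalIntegral.integral_add (Continuous.intervalIntegrable (by fun_prop) _ _)
            (Continuous.intervalIntegrable (by fun_prop) _ _),
            intervalIntegral.integral_div, intervalIntegral.integral_const_mul]
  linarith [le_abs_self (h r ^ 2 - h s ^ 2)]

lemma integral_sq_le_of_integral_deriv_sq_le {h : ℝ → ℝ} (hh : ContDiff ℝ 1 h) {D δ : ℝ}
    (hE : ∫ x in (1 / 2 : ℝ)..1, deriv h x ^ 2 ≤ 2 * D + 8 * ∫ x in (1 / 2 : ℝ)..1, h x ^ 2)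
    (hδ : 0 < δ) (hδ' : δ ≤ 1 / 12) :
    ∫ x in (1 / 2 : ℝ)..1, h x ^ 2 ≤ 2 * (∫ x in (1 / 2 : ℝ)..1, h x ^ 2 * (1 - x)) / δ
      + 16 * (∫ x in (1 / 2 : ℝ)..1, h x ^ 2 * (1 - x)) + 16 * δ ^ 2 * D := by
  set S := ∫ x in (1 / 2 : ℝ)..1, h x ^ 2
  set B := ∫ x in (1 / 2 : ℝ)..1, h x ^ 2 * (1 - x)
  set E := ∫ x in (1 / 2 : ℝ)..1, deriv h x ^ 2
  have hS : 0 ≤ S := intervalIntegral.integral_nonneg (by norm_num) fun _ _ => sq_nonneg _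
  have hB : 0 ≤ B := intervalIntegral.integral_nonneg (by norm_num) fun x hx =>
    mul_nonneg (sq_nonneg _) (by linarith [hx.2])
  have hsplit : S ≤ B / δ + δ * (16 * B + S / (4 * δ) + 4 * δ * E) :=
    integral_le_div_add_mul (hh.continuous.pow 2) (fun _ _ => sq_nonneg _)
      (fun _ hx => sq_le_integral_sq_mul_one_sub_add hh (by positivity) hx) hδ (by linarith)
  have hexpand : δ * (16 * B + S / (4 * δ) + 4 * δ * E) = 16 * δ * B + S / 4 + 4 * δ ^ 2 * E := by
    field_simp
  have hBδ : 0 ≤ B / δ := div_nonneg hB hδ.le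
  have hBδ2 : 2 * B / δ = 2 * (B / δ) := by ring
  nlinarith [mul_le_mul_of_nonneg_left hE (sq_nonneg δ), mul_le_mul_of_nonneg_left hδ' hB,
    mul_le_mul_of_nonneg_right (pow_le_pow_left₀ hδ.le hδ' 2) hS]

lemma deriv_id_mul {g : ℝ → ℝ} (hg : Differentiable ℝ g) :
    deriv (fun s => s * g s) = fun s => g s + s * deriv g s := by
  ext s
  rw [((hasDerivAt_id' s).fun_mul (hg s).hasDerivAt).deriv, one_mul]

lemma deriv_deriv_id_mul {g : ℝ → ℝ} (hg : ContDiff ℝ 2 g) {r : ℝ} (hr : r ≠ 0) :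
    deriv (deriv fun s => s * g s) r = r * Lre g r + deriv (fun s => s * g s) r / r := by
  have hg' : Differentiable ℝ (deriv g) := hg.deriv'.differentiable one_ne_zero
  have hg1 := hg.differentiable two_ne_zero
  rw [deriv_id_mul hg1,
    ((hg1 r).hasDerivAt.fun_add ((hasDerivAt_id' r).fun_mul (hg' r).hasDerivAt)).deriv, Lre]
  field_simp
  ring

lemma deriv_deriv_id_mul_sq_le {g : ℝ → ℝ} (hg : ContDiff ℝ 2 g) {r : ℝ}
    (hr : r ∈ Icc (1 / 2 : ℝ) 1) :
    deriv (deriv fun s => s * g s) r ^ 2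
      ≤ 2 * (Lre g r ^ 2 * r) + 8 * deriv (fun s => s * g s) r ^ 2 := by
  have hr0 : 0 < r := by linarith [hr.1]
  rw [deriv_deriv_id_mul hg hr0.ne']
  set L := Lre g r
  set h := deriv (fun s => s * g s) r
  have hdiv : (h / r) ^ 2 ≤ 4 * h ^ 2 := by
    rw [div_pow, div_le_iff₀ (by positivity)]
    have hr2 : 1 / 4 ≤ r ^ 2 := by nlinarith [hr.1]
    nlinarith [mul_le_mul_of_nonneg_left hr2 (sq_nonneg h)]
  nlinarith [sq_nonneg (r * L - h / r),
    mul_le_mul_of_nonneg_left hr.2 (mul_nonneg hr0.le (sq_nonneg L))]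

lemma continuousOn_Lre {g : ℝ → ℝ} (hg : ContDiff ℝ 2 g) : ContinuousOn (Lre g) {0}ᶜ := by
  have hg1 : Continuous (deriv g) := hg.continuous_deriv one_le_two
  have hg2 : Continuous (deriv (deriv g)) := hg.deriv'.continuous_deriv le_rfl
  unfold Lre
  exact (hg2.continuousOn.add (hg1.continuousOn.div continuousOn_id fun _ hr => hr)).sub
    (hg.continuous.continuousOn.div (continuousOn_id.pow 2) fun _ hr => pow_ne_zero 2 hr)

lemma integral_deriv_deriv_id_mul_sq_le {g : ℝ → ℝ} (hg : ContDiff ℝ 2 g)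
    (hLc : ContinuousOn (fun r => Lre g r ^ 2 * r) (Icc (1 / 2 : ℝ) 1)) :
    ∫ r in (1 / 2 : ℝ)..1, deriv (deriv fun s => s * g s) r ^ 2
      ≤ 2 * (∫ r in (1 / 2 : ℝ)..1, Lre g r ^ 2 * r)
        + 8 * ∫ r in (1 / 2 : ℝ)..1, deriv (fun s => s * g s) r ^ 2 := by
  have hh : ContDiff ℝ 1 (deriv fun s => s * g s) := (contDiff_id.mul hg).deriv'
  have hLi : IntervalIntegrable (fun r => Lre g r ^ 2 * r) volume (1 / 2) 1 :=
    (hLc.mono (uIcc_of_le (by norm_num : (1 / 2 : ℝ) ≤ 1)).subset).intervalIntegrable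
  have hhi : IntervalIntegrable (fun r => deriv (fun s => s * g s) r ^ 2) volume (1 / 2) 1 :=
    (hh.continuous.pow 2).intervalIntegrable _ _
  rw [← intervalIntegral.integral_const_mul, ← intervalIntegral.integral_const_mul,
    ← intervalIntegral.integral_add (hLi.const_mul 2) (hhi.const_mul 8)]
  exact intervalIntegral.integral_mono_on (by norm_num)
    (((hh.continuous_deriv le_rfl).pow 2).intervalIntegrable _ _)
    ((hLi.const_mul 2).add (hhi.const_mul 8)) fun r hr => deriv_deriv_id_mul_sq_le hg hr

lemma setLIntegral_Ioo_ofReal_eq {f : ℝ → ℝ} {a b : ℝ} (hab : a ≤ b)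
    (hf : ContinuousOn f (Icc a b)) (hf0 : ∀ x ∈ Ioo a b, 0 ≤ f x) :
    ∫⁻ x in Ioo a b, ENNReal.ofReal (f x) = ENNReal.ofReal (∫ x in a..b, f x) := by
  rw [intervalIntegral.integral_of_le hab, integral_Ioc_eq_integral_Ioo,
    ofReal_integral_eq_lintegral_ofReal (hf.integrableOn_Icc.mono_set Ioo_subset_Icc_self)
      ((ae_restrict_iff' measurableSet_Ioo).2 (ae_of_all _ hf0))]

lemma ofReal_integral_sq_mul_one_sub_le {h : ℝ → ℝ} (hh : Continuous h) :
    ENNReal.ofReal (∫ r in (1 / 2 : ℝ)..1, h r ^ 2 * (1 - r))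
      ≤ ∫⁻ r in Ioo (0 : ℝ) 1, ENNReal.ofReal (h r ^ 2 * (1 - r ^ 2) / r) := by
  rw [← setLIntegral_Ioo_ofReal_eq (by norm_num) (by fun_prop) fun r hr =>
    mul_nonneg (sq_nonneg _) (by linarith [hr.2])]
  calc ∫⁻ r in Ioo (1 / 2 : ℝ) 1, ENNReal.ofReal (h r ^ 2 * (1 - r))
      ≤ ∫⁻ r in Ioo (1 / 2 : ℝ) 1, ENNReal.ofReal (h r ^ 2 * (1 - r ^ 2) / r) := by
        refine setLIntegral_mono' measurableSet_Ioo fun r hr => ENNReal.ofReal_le_ofReal ?_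
        rw [le_div_iff₀ (by linarith [hr.1])]
        nlinarith [mul_nonneg (sq_nonneg (h r)) (show 0 ≤ 1 - r by linarith [hr.2]), hr.1]
    _ ≤ ∫⁻ r in Ioo (0 : ℝ) 1, ENNReal.ofReal (h r ^ 2 * (1 - r ^ 2) / r) :=
        lintegral_mono_set (Ioo_subset_Ioo_left (by norm_num))

lemma lintegral_sq_div_le {h : ℝ → ℝ} (hh : Continuous h) :
    ∫⁻ r in Ioo (0 : ℝ) 1, ENNReal.ofReal (h r ^ 2 / r)
      ≤ ENNReal.ofReal (4 / 3) * (∫⁻ r in Ioo (0 : ℝ) 1, ENNReal.ofReal (h r ^ 2 * (1 - r ^ 2) / r))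
        + ENNReal.ofReal (2 * ∫ r in (1 / 2 : ℝ)..1, h r ^ 2) := by
  have hsplit : Ioo (0 : ℝ) 1 = Ioc 0 (1 / 2) ∪ Ioo (1 / 2) 1 :=
    (Ioc_union_Ioo_eq_Ioo (by norm_num) (by norm_num)).symm
  refine (hsplit ▸ lintegral_union_le _ _ _).trans (add_le_add ?_ ?_)
  · calc ∫⁻ r in Ioc (0 : ℝ) (1 / 2), ENNReal.ofReal (h r ^ 2 / r)
        ≤ ∫⁻ r in Ioc (0 : ℝ) (1 / 2),
            ENNReal.ofReal (4 / 3) * ENNReal.ofReal (h r ^ 2 * (1 - r ^ 2) / r) := by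
          refine setLIntegral_mono' measurableSet_Ioc fun r hr => ?_
          rw [← ENNReal.ofReal_mul (by norm_num)]
          refine ENNReal.ofReal_le_ofReal ?_
          rw [← mul_div_assoc, div_le_div_iff_of_pos_right hr.1]
          nlinarith [mul_le_mul_of_nonneg_left (show r ^ 2 ≤ 1 / 4 by nlinarith [hr.1, hr.2])
            (sq_nonneg (h r))]
      _ ≤ _ := by
          rw [lintegral_const_mul' _ _ ENNReal.ofReal_ne_top]
          exact mul_le_mul' le_rfl (lintegral_mono_set (Ioc_subset_Ioo_right (by norm_num)))
  · rw [← intervalIntegral.integral_const_mul, ← setLIntegral_Ioo_ofReal_eq (by norm_num)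
      (by fun_prop) fun _ _ => by positivity]
    refine setLIntegral_mono' measurableSet_Ioo fun r hr => ENNReal.ofReal_le_ofReal ?_
    rw [div_le_iff₀ (by linarith [hr.1])]
    nlinarith [mul_le_mul_of_nonneg_left hr.1.le (sq_nonneg (h r))]

lemma ofReal_le_rpow_mul_rpow_add {S B D c c' p q : ℝ} {X Y : ENNReal} (hB : 0 ≤ B) (hD : 0 ≤ D)
    (hc : 0 ≤ c) (hc' : 0 ≤ c') (hp : 0 ≤ p) (hq : 0 ≤ q)
    (hS : S ≤ c * B ^ p * D ^ q + c' * B) (hBX : ENNReal.ofReal B ≤ X)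
    (hDY : ENNReal.ofReal D ≤ Y) :
    ENNReal.ofReal S ≤ ENNReal.ofReal c * X ^ p * Y ^ q + ENNReal.ofReal c' * X := by
  calc ENNReal.ofReal S ≤ ENNReal.ofReal (c * B ^ p * D ^ q + c' * B) := ENNReal.ofReal_le_ofReal hS
    _ = ENNReal.ofReal c * ENNReal.ofReal B ^ p * ENNReal.ofReal D ^ q
          + ENNReal.ofReal c' * ENNReal.ofReal B := by
        rw [ENNReal.ofReal_add (by positivity) (by positivity), ENNReal.ofReal_mul hc',
          ENNReal.ofReal_mul (by positivity), ENNReal.ofReal_mul hc,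
          ENNReal.ofReal_rpow_of_nonneg hB hp, ENNReal.ofReal_rpow_of_nonneg hD hq]
    _ ≤ ENNReal.ofReal c * X ^ p * Y ^ q + ENNReal.ofReal c' * X := by gcongr

lemma ofReal_two_mul_integral_sq_deriv_id_mul_le {g : ℝ → ℝ} (hg : ContDiff ℝ 2 g) :
    ENNReal.ofReal (2 * ∫ r in (1 / 2 : ℝ)..1, deriv (fun s => s * g s) r ^ 2)
      ≤ ENNReal.ofReal 36
          * (∫⁻ r in Ioo (0 : ℝ) 1,
              ENNReal.ofReal (deriv (fun s => s * g s) r ^ 2 * (1 - r ^ 2) / r)) ^ (2 / 3 : ℝ)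
          * (∫⁻ r in Ioo (0 : ℝ) 1, ENNReal.ofReal (Lre g r ^ 2 * r)) ^ (1 / 3 : ℝ)
        + ENNReal.ofReal 464
          * ∫⁻ r in Ioo (0 : ℝ) 1,
              ENNReal.ofReal (deriv (fun s => s * g s) r ^ 2 * (1 - r ^ 2) / r) := by
  have hh : ContDiff ℝ 1 (deriv fun s => s * g s) := (contDiff_id.mul hg).deriv'
  have hLc : ContinuousOn (fun r => Lre g r ^ 2 * r) (Icc (1 / 2 : ℝ) 1) :=
    (((continuousOn_Lre hg).mono fun r hr => (by linarith [hr.1] : (0 : ℝ) < r).ne').pow 2).mul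
      continuousOn_id
  have hB : 0 ≤ ∫ r in (1 / 2 : ℝ)..1, deriv (fun s => s * g s) r ^ 2 * (1 - r) :=
    intervalIntegral.integral_nonneg (by norm_num) fun r hr =>
      mul_nonneg (sq_nonneg _) (by linarith [hr.2])
  have hD : 0 ≤ ∫ r in (1 / 2 : ℝ)..1, Lre g r ^ 2 * r :=
    intervalIntegral.integral_nonneg (by norm_num) fun r hr =>
      mul_nonneg (sq_nonneg _) (by linarith [hr.1])
  have hDY : ENNReal.ofReal (∫ r in (1 / 2 : ℝ)..1, Lre g r ^ 2 * r)
      ≤ ∫⁻ r in Ioo (0 : ℝ) 1, ENNReal.ofReal (Lre g r ^ 2 * r) := by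
    rw [← setLIntegral_Ioo_ofReal_eq (by norm_num) hLc fun r hr =>
      mul_nonneg (sq_nonneg _) (by linarith [hr.1])]
    exact lintegral_mono_set (Ioo_subset_Ioo_left (by norm_num))
  have hS := le_rpow_mul_rpow_add_of_forall hB hD fun δ hδ hδ' =>
    integral_sq_le_of_integral_deriv_sq_le hh (integral_deriv_deriv_id_mul_sq_le hg hLc) hδ hδ'
  exact ofReal_le_rpow_mul_rpow_add hB hD (by norm_num) (by norm_num) (by norm_num) (by norm_num)
    (by linarith) (ofReal_integral_sq_mul_one_sub_le hh.continuous) hDY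

/-- There is `C > 0` such that for every `g ∈ C²([0,1])`,
`∫₀¹ |(d/dr)(rg)|² (1/r) dr ≤ C (∫₀¹ |(d/dr)(rg)|² (1−r²)/r dr)^{2/3} (∫₀¹ |Lg|² r dr)^{1/3}
  + C ∫₀¹ |(d/dr)(rg)|² (1−r²)/r dr` (quantities may be `+∞`). -/
theorem stmt5 :
    ∃ C : ℝ, 0 < C ∧ ∀ g : ℝ → ℝ, ContDiff ℝ 2 g →
      (∫⁻ r in Ioo (0:ℝ) 1, ENNReal.ofReal (|deriv (fun s => s * g s) r| ^ 2 / r))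
        ≤ ENNReal.ofReal C
            * (∫⁻ r in Ioo (0:ℝ) 1,
                ENNReal.ofReal (|deriv (fun s => s * g s) r| ^ 2 * (1 - r ^ 2) / r))
              ^ ((2:ℝ)/3)
            * (∫⁻ r in Ioo (0:ℝ) 1,
                ENNReal.ofReal (|Lre g r| ^ 2 * r)) ^ ((1:ℝ)/3)
          + ENNReal.ofReal C
            * ∫⁻ r in Ioo (0:ℝ) 1,
                ENNReal.ofReal (|deriv (fun s => s * g s) r| ^ 2 * (1 - r ^ 2) / r) := by
  refine ⟨500, by norm_num, fun g hg => ?_⟩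
  simp only [sq_abs]
  set h := deriv fun s => s * g s
  set X := ∫⁻ r in Ioo (0 : ℝ) 1, ENNReal.ofReal (h r ^ 2 * (1 - r ^ 2) / r)
  set Y := ∫⁻ r in Ioo (0 : ℝ) 1, ENNReal.ofReal (Lre g r ^ 2 * r)
  calc _ ≤ ENNReal.ofReal (4 / 3) * X + ENNReal.ofReal (2 * ∫ r in (1 / 2 : ℝ)..1, h r ^ 2) :=
        lintegral_sq_div_le ((contDiff_id.mul hg).continuous_deriv one_le_two)
    _ ≤ ENNReal.ofReal (4 / 3) * X
          + (ENNReal.ofReal 36 * X ^ (2 / 3 : ℝ) * Y ^ (1 / 3 : ℝ) + ENNReal.ofReal 464 * X) :=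
        add_le_add le_rfl (ofReal_two_mul_integral_sq_deriv_id_mul_le hg)
    _ = ENNReal.ofReal 36 * X ^ (2 / 3 : ℝ) * Y ^ (1 / 3 : ℝ)
          + (ENNReal.ofReal (4 / 3) + ENNReal.ofReal 464) * X := by ring
    _ ≤ ENNReal.ofReal 500 * X ^ (2 / 3 : ℝ) * Y ^ (1 / 3 : ℝ) + ENNReal.ofReal 500 * X := by
        rw [← ENNReal.ofReal_add (by norm_num) (by norm_num)]
        gcongr <;> norm_num
end

section
/- Let Φ ≥ 1, ξ ∈ ℝ, F^r ∈ C^∞([0,1], ℂ), and suppose ψ ∈ C^∞([0,1], ℂ) satisfies the stream-function boundary conditions and, for all r ∈ (0,1), the equation iξ Ū(r)((Lψ)(r) − ξ²ψ(r)) − (L((Lψ) − ξ²ψ))(r) + ξ²((Lψ)(r) − ξ²ψ(r)) = iξ F^r(r). Then the identity ξ ∫₀¹ (Ū(r)/r) |(d/dr)(r ψ(r))|² dr + ξ³ ∫₀¹ Ū(r) |ψ(r)|² r dr = − Re( ξ ∫₀¹ F^r(r) \overline{ψ(r)} r dr ) holds. -/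
open MeasureTheory Set Filter

/-- The operator `L g = g'' + g'/r - g/r²` acting on complex-valued functions. -/
noncomputable def Lop (g : ℝ → ℂ) (r : ℝ) : ℂ :=
  deriv (deriv g) r + deriv g r / (r : ℂ) - g r / (r : ℂ) ^ 2

/-- The Hagen–Poiseuille profile `Ū(r) = (2Φ/π)(1 − r²)`. -/
noncomputable def Ubar (Φ r : ℝ) : ℝ := 2 * Φ / Real.pi * (1 - r ^ 2)

/-- The stream-function boundary conditions:
`ψ(0) = ψ(1) = ψ'(1) = 0` and `(Lψ)(r) → 0` as `r → 0⁺`. -/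
def StreamBC (ψ : ℝ → ℂ) : Prop :=
  ψ 0 = 0 ∧ ψ 1 = 0 ∧ deriv ψ 1 = 0 ∧
    Tendsto (fun r => Lop ψ r) (nhdsWithin 0 (Ioi 0)) (nhds 0)

lemma hasDerivAt_conj {f : ℝ → ℂ} {f' : ℂ} {x : ℝ} (h : HasDerivAt f f' x) :
    HasDerivAt (fun s => (starRingEnd ℂ) (f s)) ((starRingEnd ℂ) f') x := by
  simpa only [starRingEnd_apply] using h.star

lemma norm_sq_eq_mul_conj (z : ℂ) : (‖z‖ ^ 2 : ℝ) = (z * (starRingEnd ℂ) z).re := by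
  rw [Complex.mul_conj, Complex.ofReal_re]
  exact Complex.sq_norm z

lemma hasDerivAt_norm_sq {f : ℝ → ℂ} {f' : ℂ} {x : ℝ} (h : HasDerivAt f f' x) :
    HasDerivAt (fun s => ‖f s‖ ^ 2) (2 * (f' * (starRingEnd ℂ) (f x)).re) x := by
  have h1 : HasDerivAt (fun s => f s * (starRingEnd ℂ) (f s))
      (f' * (starRingEnd ℂ) (f x) + f x * (starRingEnd ℂ) f') x := h.mul (hasDerivAt_conj h)
  have h2 : HasDerivAt (fun s => (f s * (starRingEnd ℂ) (f s)).re)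
      ((f' * (starRingEnd ℂ) (f x) + f x * (starRingEnd ℂ) f').re) x := by
    simpa only [Function.comp_def, Complex.reCLM_apply] using
      Complex.reCLM.hasFDerivAt.comp_hasDerivAt x h1
  have h3 : (fun s : ℝ => (f s * (starRingEnd ℂ) (f s)).re) = fun s => ‖f s‖ ^ 2 :=
    funext fun s => (norm_sq_eq_mul_conj _).symm
  rw [h3] at h2
  convert h2 using 1
  simp [Complex.add_re, Complex.mul_re, Complex.conj_re, Complex.conj_im]
  ring

lemma integrableOn_Ioc01 {E : Type*} [NormedAddCommGroup E] {f : ℝ → E} {C : ℝ}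
    (hf : ContinuousOn f (Ioc (0:ℝ) 1)) (hC : ∀ x ∈ Ioc (0:ℝ) 1, ‖f x‖ ≤ C) :
    IntegrableOn f (Ioc (0:ℝ) 1) := by
  have hmeas : AEStronglyMeasurable f (volume.restrict (Ioc (0:ℝ) 1)) :=
    hf.aestronglyMeasurable measurableSet_Ioc
  refine Integrable.mono' (integrable_const C) hmeas ?_
  exact (ae_restrict_iff' measurableSet_Ioc).2 (Eventually.of_forall hC)

lemma tendsto_tail_integral {f : ℝ → ℝ} {C : ℝ}
    (hf : IntegrableOn f (Ioc (0:ℝ) 1) volume)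
    (hC : ∀ x ∈ Ioc (0:ℝ) 1, ‖f x‖ ≤ C) :
    Tendsto (fun ε => ∫ x in Ioc ε 1, f x) (nhdsWithin 0 (Ioi 0))
      (nhds (∫ x in Ioc (0:ℝ) 1, f x)) := by
  have hC0 : 0 ≤ C := le_trans (norm_nonneg _) (hC (1:ℝ) (by constructor <;> norm_num))
  rw [tendsto_iff_dist_tendsto_zero]
  have hbound : ∀ ε ∈ Ioo (0:ℝ) 1,
      dist (∫ x in Ioc ε 1, f x) (∫ x in Ioc (0:ℝ) 1, f x) ≤ C * ε := by
    intro ε hε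
    have hsub1 : IntegrableOn f (Ioc (0:ℝ) ε) volume :=
      hf.mono_set (Ioc_subset_Ioc le_rfl hε.2.le)
    have hsub2 : IntegrableOn f (Ioc ε 1) volume :=
      hf.mono_set (Ioc_subset_Ioc hε.1.le le_rfl)
    have hsplit : (∫ x in Ioc (0:ℝ) 1, f x)
        = (∫ x in Ioc (0:ℝ) ε, f x) + ∫ x in Ioc ε 1, f x := by
      rw [← Ioc_union_Ioc_eq_Ioc hε.1.le hε.2.le]
      exact setIntegral_union (Ioc_disjoint_Ioc_of_le le_rfl) measurableSet_Ioc hsub1 hsub2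
    have hnorm : ‖∫ x in Ioc (0:ℝ) ε, f x‖ ≤ C * ε := by
      have := norm_setIntegral_le_of_norm_le_const (μ := volume) (s := Ioc (0:ℝ) ε) (f := f)
        (C := C) measure_Ioc_lt_top
        (fun x hx => hC x (Ioc_subset_Ioc le_rfl hε.2.le hx))
      calc ‖∫ x in Ioc (0:ℝ) ε, f x‖ ≤ C * (volume (Ioc (0:ℝ) ε)).toReal := this
        _ = C * ε := by rw [Real.volume_Ioc]; rw [ENNReal.toReal_ofReal (by linarith [hε.1])]; ring_nf
    rw [Real.dist_eq, hsplit]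
    have : |(∫ x in Ioc ε 1, f x) - ((∫ x in Ioc (0:ℝ) ε, f x) + ∫ x in Ioc ε 1, f x)|
        = ‖∫ x in Ioc (0:ℝ) ε, f x‖ := by
      rw [Real.norm_eq_abs, abs_sub_comm]; ring_nf
    rw [this]; exact hnorm
  apply squeeze_zero_norm' (a := fun ε => C * ε)
  · filter_upwards [Ioo_mem_nhdsGT_of_mem (by constructor <;> norm_num :
      (0:ℝ) ∈ Ico (0:ℝ) 1)] with ε hε
    simpa [Real.norm_eq_abs, _root_.abs_of_nonneg dist_nonneg] using hbound ε hε
  · have : Tendsto (fun ε : ℝ => C * ε) (nhdsWithin 0 (Ioi 0)) (nhds (C * 0)) :=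
      (tendsto_const_nhds.mul Filter.tendsto_id).mono_left nhdsWithin_le_nhds
    simpa using this

set_option maxHeartbeats 2000000 in
/-- the basic energy identity for the stream-function equation
with radial forcing `iξ F^r`. -/
theorem stmt7 (Φ ξ : ℝ) (Fr ψ : ℝ → ℂ) (hΦ : 1 ≤ Φ)
    (hFr : ContDiff ℝ (⊤ : ℕ∞) Fr) (hψ : ContDiff ℝ (⊤ : ℕ∞) ψ) (hbc : StreamBC ψ)
    (heq : ∀ r ∈ Ioo (0:ℝ) 1,
      Complex.I * (ξ : ℂ) * (Ubar Φ r : ℂ) * (Lop ψ r - (ξ:ℂ)^2 * ψ r)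
        - Lop (fun s => Lop ψ s - (ξ:ℂ)^2 * ψ s) r
        + (ξ:ℂ)^2 * (Lop ψ r - (ξ:ℂ)^2 * ψ r)
      = Complex.I * (ξ : ℂ) * Fr r) :
    ξ * (∫ r in Ioo (0:ℝ) 1, Ubar Φ r / r * ‖deriv (fun s : ℝ => (s:ℂ) * ψ s) r‖ ^ 2)
      + ξ ^ 3 * (∫ r in Ioo (0:ℝ) 1, Ubar Φ r * ‖ψ r‖ ^ 2 * r)
    = - ((ξ : ℂ) * ∫ r in Ioo (0:ℝ) 1,
          Fr r * (starRingEnd ℂ) (ψ r) * (r : ℂ)).re := by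
  obtain ⟨hψ0, hψ1, hψd1, hLtend⟩ := hbc
  -- derivatives of ψ
  set p1 : ℝ → ℂ := deriv ψ with hp1
  set p2 : ℝ → ℂ := deriv p1 with hp2
  set p3 : ℝ → ℂ := deriv p2 with hp3
  set p4 : ℝ → ℂ := deriv p3 with hp4
  have hψi : ContDiff ℝ (⊤ : ℕ∞) ψ := hψ.of_le (by simp)
  have hc1 : ContDiff ℝ (⊤ : ℕ∞) p1 := by rw [hp1]; exact (contDiff_infty_iff_deriv.mp hψi).2
  have hc2 : ContDiff ℝ (⊤ : ℕ∞) p2 := by rw [hp2]; exact (contDiff_infty_iff_deriv.mp hc1).2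
  have hc3 : ContDiff ℝ (⊤ : ℕ∞) p3 := by rw [hp3]; exact (contDiff_infty_iff_deriv.mp hc2).2
  have hc4 : ContDiff ℝ (⊤ : ℕ∞) p4 := by rw [hp4]; exact (contDiff_infty_iff_deriv.mp hc3).2
  have hD0 : ∀ r : ℝ, HasDerivAt ψ (p1 r) r := fun r =>
    ((hψi.differentiable (by simp)) r).hasDerivAt
  have hD1 : ∀ r : ℝ, HasDerivAt p1 (p2 r) r := fun r =>
    ((hc1.differentiable (by simp)) r).hasDerivAt
  have hD2 : ∀ r : ℝ, HasDerivAt p2 (p3 r) r := fun r =>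
    ((hc2.differentiable (by simp)) r).hasDerivAt
  have hD3 : ∀ r : ℝ, HasDerivAt p3 (p4 r) r := fun r =>
    ((hc3.differentiable (by simp)) r).hasDerivAt
  have hid : ∀ r : ℝ, HasDerivAt (fun s : ℝ => (s:ℂ)) 1 r := fun r =>
    (hasDerivAt_id r).ofReal_comp
  set Q : ℝ := 2 * Φ / Real.pi with hQ
  -- auxiliary functions
  set φ : ℝ → ℂ := fun s => Lop ψ s - (ξ:ℂ)^2 * ψ s with hφ
  set up : ℝ → ℂ := fun s => ψ s + (s:ℂ) * p1 s with hup
  set φd : ℝ → ℂ := fun s =>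
    p3 s + p2 s / (s:ℂ) - 2 * p1 s / (s:ℂ)^2 + 2 * ψ s / (s:ℂ)^3 - (ξ:ℂ)^2 * p1 s with hφd
  set φdd : ℝ → ℂ := fun s =>
    p4 s + p3 s / (s:ℂ) - 3 * p2 s / (s:ℂ)^2 + 6 * p1 s / (s:ℂ)^3 - 6 * ψ s / (s:ℂ)^4
      - (ξ:ℂ)^2 * p2 s with hφdd
  set G : ℝ → ℂ := fun s =>
    Complex.I * (ξ:ℂ) * ((Ubar Φ s : ℝ) : ℂ) * up s * (starRingEnd ℂ) (ψ s)
      - (s:ℂ) * (φd s * (starRingEnd ℂ) (ψ s) - φ s * (starRingEnd ℂ) (p1 s)) with hG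
  set H : ℝ → ℝ := fun s => (G s).im + ξ * Q * (s^2 * ‖ψ s‖^2) with hH
  set f1 : ℝ → ℝ := fun r => (Fr r * (starRingEnd ℂ) (ψ r) * (r:ℂ)).re with hf1
  set f2 : ℝ → ℝ := fun r => Ubar Φ r / r * ‖up r‖^2 with hf2
  set f3 : ℝ → ℝ := fun r => Ubar Φ r * ‖ψ r‖^2 * r with hf3
  set cf : ℝ → ℝ := fun r => ξ * f1 r + ξ * f2 r + ξ^3 * f3 r with hcf
  -- explicit form of φ
  have hφexp : φ = fun s => p2 s + p1 s / (s:ℂ) - ψ s / (s:ℂ)^2 - (ξ:ℂ)^2 * ψ s := by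
    funext s
    rw [hφ]
    show Lop ψ s - (ξ:ℂ)^2 * ψ s = _
    rw [Lop, hp2, hp1]
  have hφval : ∀ s : ℝ, Lop ψ s - (ξ:ℂ)^2 * ψ s = φ s := by
    intro s; rw [hφ]
  -- derivative of φ
  have hφat : ∀ s : ℝ, s ≠ 0 → HasDerivAt φ (φd s) s := by
    intro s hs
    have hsc : (s:ℂ) ≠ 0 := Complex.ofReal_ne_zero.2 hs
    have hpow2 : HasDerivAt (fun y : ℝ => ((y:ℂ))^2) (2*(s:ℂ)) s := by
      have h := (hid s).mul (hid s)
      have he : (fun y : ℝ => ((y:ℂ))^2) = fun y : ℝ => (y:ℂ) * (y:ℂ) := by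
        funext y; ring
      rw [he]; convert h using 1; rfl; rfl; ring
    rw [hφexp, hφd]
    have h := (((hD2 s).add ((hD1 s).div (hid s) hsc)).sub
      ((hD0 s).div hpow2 (pow_ne_zero 2 hsc))).sub ((hD0 s).const_mul ((ξ:ℂ)^2))
    convert h using 1
    · rfl
    · rfl
    field_simp [hsc]
    ring
  have hφdat : ∀ s : ℝ, s ≠ 0 → HasDerivAt φd (φdd s) s := by
    intro s hs
    have hsc : (s:ℂ) ≠ 0 := Complex.ofReal_ne_zero.2 hs
    have hpow2 : HasDerivAt (fun y : ℝ => ((y:ℂ))^2) (2*(s:ℂ)) s := by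
      have h := (hid s).mul (hid s)
      have he : (fun y : ℝ => ((y:ℂ))^2) = fun y : ℝ => (y:ℂ) * (y:ℂ) := by
        funext y; ring
      rw [he]; convert h using 1; rfl; rfl; ring
    have hpow3 : HasDerivAt (fun y : ℝ => ((y:ℂ))^3) (3*(s:ℂ)^2) s := by
      have h := ((hid s).mul (hid s)).mul (hid s)
      have he : (fun y : ℝ => ((y:ℂ))^3) = fun y : ℝ => (y:ℂ) * (y:ℂ) * (y:ℂ) := by
        funext y; ring
      rw [he]; convert h using 1; rfl; rfl; simp only [Pi.mul_apply]; ring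
    rw [hφd, hφdd]
    have h := ((((hD3 s).add ((hD2 s).div (hid s) hsc)).sub
      (((hD1 s).const_mul (2:ℂ)).div hpow2 (pow_ne_zero 2 hsc))).add
      (((hD0 s).const_mul (2:ℂ)).div hpow3 (pow_ne_zero 3 hsc))).sub
      ((hD1 s).const_mul ((ξ:ℂ)^2))
    convert h using 1
    · rfl
    · rfl
    field_simp [hsc]
    ring
  -- Lop of φ
  have hLop_phi : ∀ r : ℝ, r ≠ 0 → Lop φ r = φdd r + φd r / (r:ℂ) - φ r / (r:ℂ)^2 := by
    intro r hr
    have hev : deriv φ =ᶠ[nhds r] φd := by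
      filter_upwards [isOpen_ne.mem_nhds hr] with s hs
      exact (hφat s hs).deriv
    rw [Lop, hev.deriv_eq, (hφdat r hr).deriv, (hφat r hr).deriv]
  -- derivative of up
  have hupat : ∀ r : ℝ, HasDerivAt up (2 * p1 r + (r:ℂ) * p2 r) r := by
    intro r
    rw [hup]
    have h := (hD0 r).add ((hid r).mul (hD1 r))
    convert h using 1
    · rfl
    · rfl
    ring
  -- derivative of the real profile
  have hUat : ∀ r : ℝ, HasDerivAt (fun s : ℝ => ((Ubar Φ s : ℝ) : ℂ)) ((-(2*Q*r) : ℝ) : ℂ) r := by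
    intro r
    have h2 : HasDerivAt (Ubar Φ) (-(2*Q*r)) r := by
      have h3 := ((hasDerivAt_pow 2 r).const_sub 1).const_mul (2 * Φ / Real.pi)
      have h4 : HasDerivAt (Ubar Φ) (2 * Φ / Real.pi * -(↑2 * r ^ (2-1))) r := by
        show HasDerivAt (fun y => 2 * Φ / Real.pi * (1 - y ^ 2)) _ r
        simpa using h3
      convert h4 using 1
      rw [hQ]; push_cast; ring
    exact h2.ofReal_comp
  -- main pointwise derivative identity
  have hmain : ∀ r ∈ Ioo (0:ℝ) 1, HasDerivAt H (cf r) r := by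
    intro r hr
    have hrne : r ≠ 0 := ne_of_gt hr.1
    have hrc : (r:ℂ) ≠ 0 := Complex.ofReal_ne_zero.2 hrne
    have hterm1 := (((hUat r).const_mul (Complex.I * (ξ:ℂ))).mul (hupat r)).mul
      (hasDerivAt_conj (hD0 r))
    have hterm2 := (hid r).mul (((hφdat r hrne).mul (hasDerivAt_conj (hD0 r))).sub
      ((hφat r hrne).mul (hasDerivAt_conj (hD1 r))))
    have hGat : HasDerivAt G (
        Complex.I * (ξ:ℂ) * ((-(2*Q*r) : ℝ) : ℂ) * up r * (starRingEnd ℂ) (ψ r)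
        + Complex.I * (ξ:ℂ) * ((Ubar Φ r : ℝ) : ℂ) * (2 * p1 r + (r:ℂ) * p2 r)
            * (starRingEnd ℂ) (ψ r)
        + Complex.I * (ξ:ℂ) * ((Ubar Φ r : ℝ) : ℂ) * up r * (starRingEnd ℂ) (p1 r)
        - (φd r * (starRingEnd ℂ) (ψ r) - φ r * (starRingEnd ℂ) (p1 r))
        - (r:ℂ) * (φdd r * (starRingEnd ℂ) (ψ r) - φ r * (starRingEnd ℂ) (p2 r))) r := by
      rw [hG]
      convert hterm1.sub hterm2 using 1
      · rfl
      · rfl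
      simp only [Pi.mul_apply, Pi.sub_apply]
      ring
    have him : HasDerivAt (fun s => (G s).im) ((
        Complex.I * (ξ:ℂ) * ((-(2*Q*r) : ℝ) : ℂ) * up r * (starRingEnd ℂ) (ψ r)
        + Complex.I * (ξ:ℂ) * ((Ubar Φ r : ℝ) : ℂ) * (2 * p1 r + (r:ℂ) * p2 r)
            * (starRingEnd ℂ) (ψ r)
        + Complex.I * (ξ:ℂ) * ((Ubar Φ r : ℝ) : ℂ) * up r * (starRingEnd ℂ) (p1 r)
        - (φd r * (starRingEnd ℂ) (ψ r) - φ r * (starRingEnd ℂ) (p1 r))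
        - (r:ℂ) * (φdd r * (starRingEnd ℂ) (ψ r) - φ r * (starRingEnd ℂ) (p2 r))).im) r := by
      simpa only [Function.comp_def, Complex.imCLM_apply] using
        Complex.imCLM.hasFDerivAt.comp_hasDerivAt r hGat
    have hsq := (hasDerivAt_pow 2 r).mul (hasDerivAt_norm_sq (hD0 r))
    have hHat := him.add (hsq.const_mul (ξ * Q))
    rw [hH]
    convert hHat using 1
    · rfl
    · rfl
    · rfl
    -- now the pure algebra
    have E := heq r hr
    rw [hLop_phi r hrne, hφval r] at E
    rw [hφdd] at E
    simp only at E
    have hkey : p4 r = Complex.I * (ξ:ℂ) * ((Ubar Φ r : ℝ):ℂ) * φ r + (ξ:ℂ)^2 * φ r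
        - Complex.I * (ξ:ℂ) * Fr r
        - (p3 r/(r:ℂ) - 3*p2 r/(r:ℂ)^2 + 6*p1 r/(r:ℂ)^3 - 6*ψ r/(r:ℂ)^4 - (ξ:ℂ)^2*p2 r)
        - φd r/(r:ℂ) + φ r/(r:ℂ)^2 := by
      linear_combination -E
    simp only [hcf, hf1, hf2, hf3, hφdd]
    rw [hkey]
    simp only [hφexp, hφd, hup]
    clear_value p1 p2 p3 p4 φ φd φdd up Q G H f1 f2 f3 cf
    simp only [norm_sq_eq_mul_conj]
    simp only [map_add, map_sub, map_mul, map_div₀, map_pow, map_ofNat,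
      Complex.conj_ofReal, Complex.conj_I]
    simp only [← Complex.ofReal_pow]
    simp only [Complex.add_re, Complex.add_im, Complex.sub_re, Complex.sub_im,
      Complex.mul_re, Complex.mul_im, Complex.div_ofReal_re, Complex.div_ofReal_im,
      Complex.I_re, Complex.I_im, Complex.ofReal_re, Complex.ofReal_im,
      Complex.conj_re, Complex.conj_im, Complex.neg_re,
      Complex.neg_im, Complex.re_ofNat, Complex.im_ofNat]
    field_simp [hrne]
    ring
  -- bounds
  obtain ⟨M0, hM0⟩ := (isCompact_Icc : IsCompact (Icc (0:ℝ) 1)).exists_bound_of_continuousOn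
    (hψi.continuous.continuousOn)
  obtain ⟨M1, hM1⟩ := (isCompact_Icc : IsCompact (Icc (0:ℝ) 1)).exists_bound_of_continuousOn
    (hc1.continuous.continuousOn)
  obtain ⟨M2, hM2⟩ := (isCompact_Icc : IsCompact (Icc (0:ℝ) 1)).exists_bound_of_continuousOn
    (hc2.continuous.continuousOn)
  obtain ⟨M3, hM3⟩ := (isCompact_Icc : IsCompact (Icc (0:ℝ) 1)).exists_bound_of_continuousOn
    (hc3.continuous.continuousOn)
  obtain ⟨MF, hMF⟩ := (isCompact_Icc : IsCompact (Icc (0:ℝ) 1)).exists_bound_of_continuousOn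
    ((hFr.of_le (by simp) : ContDiff ℝ (⊤:ℕ∞) Fr).continuous.continuousOn)
  have h01 : (0:ℝ) ∈ Icc (0:ℝ) 1 := by constructor <;> norm_num
  have hM0nn : 0 ≤ M0 := le_trans (norm_nonneg _) (hM0 0 h01)
  have hM1nn : 0 ≤ M1 := le_trans (norm_nonneg _) (hM1 0 h01)
  have hM2nn : 0 ≤ M2 := le_trans (norm_nonneg _) (hM2 0 h01)
  have hM3nn : 0 ≤ M3 := le_trans (norm_nonneg _) (hM3 0 h01)
  have hMFnn : 0 ≤ MF := le_trans (norm_nonneg _) (hMF 0 h01)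
  have hQ0 : 0 ≤ Q := by rw [hQ]; positivity
  -- linear bound on ψ
  have hlin : ∀ s ∈ Icc (0:ℝ) 1, ‖ψ s‖ ≤ M1 * s := by
    intro s hs
    have hFTC : ∫ t in (0:ℝ)..s, p1 t = ψ s - ψ 0 :=
      intervalIntegral.integral_eq_sub_of_hasDerivAt (fun t _ => hD0 t)
        (hc1.continuous.intervalIntegrable 0 s)
    rw [hψ0, sub_zero] at hFTC
    rw [← hFTC]
    have hb := intervalIntegral.norm_integral_le_of_norm_le_const
      (C := M1) (f := p1) (a := 0) (b := s) ?_
    · calc ‖∫ t in (0:ℝ)..s, p1 t‖ ≤ M1 * |s - 0| := hb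
        _ = M1 * s := by rw [sub_zero, _root_.abs_of_nonneg hs.1]
    · intro x hx
      rw [Set.uIoc_of_le hs.1] at hx
      exact hM1 x ⟨hx.1.le, hx.2.trans hs.2⟩
  -- quadratic bound on s ψ' - ψ
  have hquad : ∀ s ∈ Icc (0:ℝ) 1, ‖(s:ℂ) * p1 s - ψ s‖ ≤ M2 * s^2 := by
    intro s hs
    have hg : ∀ t : ℝ, HasDerivAt (fun t : ℝ => (t:ℂ) * p1 t - ψ t) ((t:ℂ) * p2 t) t := by
      intro t
      have h := ((hid t).mul (hD1 t)).sub (hD0 t)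
      convert h using 1
      · rfl
      · rfl
      ring
    have hFTC : ∫ t in (0:ℝ)..s, (t:ℂ) * p2 t
        = ((s:ℂ) * p1 s - ψ s) - ((0:ℝ)*p1 0 - ψ 0) :=
      intervalIntegral.integral_eq_sub_of_hasDerivAt (fun t _ => hg t)
        ((Complex.continuous_ofReal.mul hc2.continuous).intervalIntegrable 0 s)
    rw [hψ0] at hFTC
    simp only [Complex.ofReal_zero, zero_mul, sub_zero] at hFTC
    rw [← hFTC]
    have hb := intervalIntegral.norm_integral_le_of_norm_le_const
      (C := M2 * s) (f := fun t => (t:ℂ) * p2 t) (a := 0) (b := s) ?_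
    · calc ‖∫ t in (0:ℝ)..s, (t:ℂ) * p2 t‖ ≤ M2 * s * |s - 0| := hb
        _ = M2 * s^2 := by rw [sub_zero, _root_.abs_of_nonneg hs.1]; ring
    · intro x hx
      rw [Set.uIoc_of_le hs.1] at hx
      rw [norm_mul, Complex.norm_real, Real.norm_eq_abs, _root_.abs_of_nonneg hx.1.le]
      have h1 : ‖p2 x‖ ≤ M2 := hM2 x ⟨hx.1.le, hx.2.trans hs.2⟩
      have h2 : x ≤ s := hx.2
      nlinarith [norm_nonneg (p2 x), hx.1.le]
  -- bound on up
  have hupb : ∀ s ∈ Icc (0:ℝ) 1, ‖up s‖ ≤ 2 * M1 * s := by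
    intro s hs
    rw [hup]
    calc ‖ψ s + (s:ℂ) * p1 s‖ ≤ ‖ψ s‖ + ‖(s:ℂ) * p1 s‖ := norm_add_le _ _
      _ ≤ M1 * s + s * M1 := by
          apply add_le_add (hlin s hs)
          rw [norm_mul, Complex.norm_real, Real.norm_eq_abs, _root_.abs_of_nonneg hs.1]
          exact mul_le_mul_of_nonneg_left (hM1 s hs) hs.1
      _ = 2 * M1 * s := by ring
  -- bound on Ubar
  have hUb : ∀ s ∈ Icc (0:ℝ) 1, |Ubar Φ s| ≤ Q := by
    intro s hs
    have h1 : 0 ≤ 1 - s^2 := by nlinarith [hs.1, hs.2]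
    have h2 : 1 - s^2 ≤ 1 := by nlinarith [hs.1]
    rw [Ubar, ← hQ, _root_.abs_of_nonneg (mul_nonneg hQ0 h1)]
    nlinarith
  -- continuity facts
  have hUcont : Continuous (Ubar Φ) := by
    unfold Ubar; fun_prop
  have hupcont : Continuous up := by
    rw [hup]; exact hψi.continuous.add (Complex.continuous_ofReal.mul hc1.continuous)
  have hf1cont : Continuous f1 := by
    rw [hf1]
    exact Complex.continuous_re.comp
      ((((hFr.of_le (by simp) : ContDiff ℝ (⊤:ℕ∞) Fr).continuous.mul
        (Complex.continuous_conj.comp hψi.continuous)).mul Complex.continuous_ofReal))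
  have hf3cont : Continuous f3 := by
    rw [hf3]
    exact (hUcont.mul ((hψi.continuous.norm).pow 2)).mul continuous_id
  have hf2contOn : ContinuousOn f2 (Ioc (0:ℝ) 1) := by
    rw [hf2]
    exact (hUcont.continuousOn.div continuousOn_id fun x hx => ne_of_gt hx.1).mul
      ((hupcont.norm.pow 2).continuousOn)
  -- bounds on f1, f2, f3 and cf
  have hf1b : ∀ x ∈ Ioc (0:ℝ) 1, ‖f1 x‖ ≤ MF * M0 := by
    intro x hx
    have hxI : x ∈ Icc (0:ℝ) 1 := ⟨hx.1.le, hx.2⟩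
    rw [hf1]
    calc ‖(Fr x * (starRingEnd ℂ) (ψ x) * (x:ℂ)).re‖
        ≤ ‖Fr x * (starRingEnd ℂ) (ψ x) * (x:ℂ)‖ := Complex.abs_re_le_norm _
      _ = ‖Fr x‖ * ‖ψ x‖ * |x| := by
          rw [norm_mul, norm_mul, RCLike.norm_conj, Complex.norm_real, Real.norm_eq_abs]
      _ ≤ MF * M0 * 1 := by
          apply mul_le_mul _ (by rw [_root_.abs_of_nonneg hx.1.le]; exact hx.2) (abs_nonneg _)
            (mul_nonneg hMFnn hM0nn)
          exact mul_le_mul (hMF x hxI) (hM0 x hxI) (norm_nonneg _) hMFnn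
      _ = MF * M0 := by ring
  have hf2b : ∀ x ∈ Ioc (0:ℝ) 1, ‖f2 x‖ ≤ Q * (2*M1)^2 := by
    intro x hx
    have hxI : x ∈ Icc (0:ℝ) 1 := ⟨hx.1.le, hx.2⟩
    rw [hf2]
    have h1 : ‖up x‖^2 ≤ (2*M1*x)^2 := by
      apply pow_le_pow_left₀ (norm_nonneg _) (hupb x hxI)
    have hxne : x ≠ 0 := ne_of_gt hx.1
    have heq : Q / x * ((2*M1*x)^2) = Q * (2*M1)^2 * x := by
      field_simp
    rw [Real.norm_eq_abs, abs_mul, abs_div, _root_.abs_of_nonneg hx.1.le]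
    calc |Ubar Φ x| / x * |‖up x‖^2|
        ≤ Q / x * ((2*M1*x)^2) := by
          rw [_root_.abs_of_nonneg (by positivity : (0:ℝ) ≤ ‖up x‖^2)]
          apply mul_le_mul ((div_le_div_iff_of_pos_right hx.1).2 (hUb x hxI)) h1 (by positivity) (div_nonneg hQ0 hx.1.le)
      _ = Q * (2*M1)^2 * x := heq
      _ ≤ Q * (2*M1)^2 * 1 := by
          apply mul_le_mul_of_nonneg_left hx.2 (by positivity)
      _ = Q * (2*M1)^2 := by ring
  have hf3b : ∀ x ∈ Ioc (0:ℝ) 1, ‖f3 x‖ ≤ Q * M0^2 := by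
    intro x hx
    have hxI : x ∈ Icc (0:ℝ) 1 := ⟨hx.1.le, hx.2⟩
    rw [hf3, Real.norm_eq_abs, abs_mul, abs_mul, _root_.abs_of_nonneg hx.1.le,
      _root_.abs_of_nonneg (by positivity : (0:ℝ) ≤ ‖ψ x‖^2)]
    calc |Ubar Φ x| * ‖ψ x‖^2 * x ≤ Q * M0^2 * 1 := by
          apply mul_le_mul _ hx.2 hx.1.le (by positivity)
          exact mul_le_mul (hUb x hxI)
            (pow_le_pow_left₀ (norm_nonneg _) (hM0 x hxI) 2) (by positivity) hQ0
      _ = Q * M0^2 := by ring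
  have hcfb : ∀ x ∈ Ioc (0:ℝ) 1, ‖cf x‖ ≤ |ξ| * (MF*M0) + |ξ| * (Q*(2*M1)^2) + |ξ^3| * (Q*M0^2) := by
    intro x hx
    rw [hcf]
    calc ‖ξ * f1 x + ξ * f2 x + ξ^3 * f3 x‖
        ≤ ‖ξ * f1 x + ξ * f2 x‖ + ‖ξ^3 * f3 x‖ := norm_add_le _ _
      _ ≤ ‖ξ * f1 x‖ + ‖ξ * f2 x‖ + ‖ξ^3 * f3 x‖ := by
          gcongr
          exact norm_add_le _ _
      _ ≤ |ξ| * (MF*M0) + |ξ| * (Q*(2*M1)^2) + |ξ^3| * (Q*M0^2) := by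
          simp only [norm_mul, Real.norm_eq_abs]
          refine add_le_add (add_le_add ?_ ?_) ?_
          · exact mul_le_mul_of_nonneg_left (hf1b x hx) (abs_nonneg ξ)
          · exact mul_le_mul_of_nonneg_left (hf2b x hx) (abs_nonneg ξ)
          · exact mul_le_mul_of_nonneg_left (hf3b x hx) (abs_nonneg _)
  -- integrability
  have hcfcontOn : ContinuousOn cf (Ioc (0:ℝ) 1) := by
    rw [hcf]
    exact ((continuousOn_const.mul hf1cont.continuousOn).add
      (continuousOn_const.mul hf2contOn)).add (continuousOn_const.mul hf3cont.continuousOn)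
  have hcfint : IntegrableOn cf (Ioc (0:ℝ) 1) := integrableOn_Ioc01 hcfcontOn hcfb
  have hf1int : IntegrableOn f1 (Ioc (0:ℝ) 1) := hf1cont.integrableOn_Ioc
  have hf2int : IntegrableOn f2 (Ioc (0:ℝ) 1) := integrableOn_Ioc01 hf2contOn hf2b
  have hf3int : IntegrableOn f3 (Ioc (0:ℝ) 1) := hf3cont.integrableOn_Ioc
  have hFcint : IntegrableOn (fun r : ℝ => Fr r * (starRingEnd ℂ) (ψ r) * (r:ℂ)) (Ioc (0:ℝ) 1) :=
    (((hFr.of_le (by simp) : ContDiff ℝ (⊤:ℕ∞) Fr).continuous.mul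
      (Complex.continuous_conj.comp hψi.continuous)).mul
      Complex.continuous_ofReal).integrableOn_Ioc
  -- limit of H at 0+
  have hψt : Tendsto ψ (nhdsWithin 0 (Ioi 0)) (nhds 0) := by
    have h := hψi.continuous.tendsto 0
    rw [hψ0] at h
    exact h.mono_left nhdsWithin_le_nhds
  have hA1 : Tendsto (fun s => Complex.I * (ξ:ℂ) * ((Ubar Φ s : ℝ):ℂ) * up s
      * (starRingEnd ℂ) (ψ s)) (nhdsWithin 0 (Ioi 0)) (nhds 0) := by
    have hcont : Continuous fun s => Complex.I * (ξ:ℂ) * ((Ubar Φ s : ℝ):ℂ) * up s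
        * (starRingEnd ℂ) (ψ s) :=
      ((continuous_const.mul (Complex.continuous_ofReal.comp hUcont)).mul hupcont).mul
        (Complex.continuous_conj.comp hψi.continuous)
    have h0 := (hcont.tendsto 0).mono_left (nhdsWithin_le_nhds (s := Ioi (0:ℝ)))
    simpa [hup, hψ0] using h0
  have hφdbnd : ∀ s ∈ Ioc (0:ℝ) 1, ‖(s:ℂ) * φd s‖ ≤ M3 + M2 + ξ^2*M1 + 2*M2 := by
    intro s hs
    have hsI : s ∈ Icc (0:ℝ) 1 := ⟨hs.1.le, hs.2⟩
    have hsne : s ≠ 0 := ne_of_gt hs.1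
    have hsc : (s:ℂ) ≠ 0 := Complex.ofReal_ne_zero.2 hsne
    have hident : (s:ℂ) * φd s
        = (s:ℂ)*p3 s + p2 s - (ξ:ℂ)^2*((s:ℂ)*p1 s) - 2*((s:ℂ)*p1 s - ψ s)/(s:ℂ)^2 := by
      rw [hφd]
      field_simp
      ring
    rw [hident]
    have t1 : ‖(s:ℂ)*p3 s‖ ≤ M3 := by
      rw [norm_mul, Complex.norm_real, Real.norm_eq_abs, _root_.abs_of_nonneg hs.1.le]
      calc s*‖p3 s‖ ≤ 1*M3 := mul_le_mul hs.2 (hM3 s hsI) (norm_nonneg _) zero_le_one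
        _ = M3 := one_mul M3
    have t2 : ‖p2 s‖ ≤ M2 := hM2 s hsI
    have t3 : ‖(ξ:ℂ)^2*((s:ℂ)*p1 s)‖ ≤ ξ^2*M1 := by
      rw [norm_mul, norm_pow, norm_mul, Complex.norm_real, Complex.norm_real,
        Real.norm_eq_abs, Real.norm_eq_abs, _root_.abs_of_nonneg hs.1.le, _root_.sq_abs]
      have h1 : ‖p1 s‖ ≤ M1 := hM1 s hsI
      have h2 : s*‖p1 s‖ ≤ M1 := by nlinarith [norm_nonneg (p1 s), hs.1.le, hs.2]
      exact mul_le_mul_of_nonneg_left h2 (sq_nonneg ξ)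
    have t4 : ‖2*((s:ℂ)*p1 s - ψ s)/(s:ℂ)^2‖ ≤ 2*M2 := by
      rw [norm_div, norm_mul, norm_pow, Complex.norm_real, Real.norm_eq_abs,
        _root_.abs_of_nonneg hs.1.le]
      rw [div_le_iff₀ (by positivity : (0:ℝ) < s^2)]
      have hq := hquad s hsI
      have h2 : ‖(2:ℂ)‖ = 2 := by norm_num
      rw [h2]
      nlinarith [norm_nonneg ((s:ℂ)*p1 s - ψ s)]
    have u1 := norm_sub_le ((s:ℂ)*p3 s + p2 s - (ξ:ℂ)^2*((s:ℂ)*p1 s))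
      (2*((s:ℂ)*p1 s - ψ s)/(s:ℂ)^2)
    have u2 := norm_sub_le ((s:ℂ)*p3 s + p2 s) ((ξ:ℂ)^2*((s:ℂ)*p1 s))
    have u3 := norm_add_le ((s:ℂ)*p3 s) (p2 s)
    linarith
  have hA2 : Tendsto (fun s : ℝ => (s:ℂ) * (φd s * (starRingEnd ℂ) (ψ s)))
      (nhdsWithin 0 (Ioi 0)) (nhds 0) := by
    apply squeeze_zero_norm' (a := fun s => (M3 + M2 + ξ^2*M1 + 2*M2) * ‖ψ s‖)
    · filter_upwards [Ioo_mem_nhdsGT_of_mem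
        (⟨le_refl 0, zero_lt_one⟩ : (0:ℝ) ∈ Ico (0:ℝ) 1)] with s hs
      have h1 := hφdbnd s ⟨hs.1, hs.2.le⟩
      calc ‖(s:ℂ)*(φd s*(starRingEnd ℂ) (ψ s))‖ = ‖(s:ℂ)*φd s‖*‖ψ s‖ := by
            rw [← mul_assoc, norm_mul, RCLike.norm_conj]
        _ ≤ (M3+M2+ξ^2*M1+2*M2)*‖ψ s‖ := mul_le_mul_of_nonneg_right h1 (norm_nonneg _)
    · have h := tendsto_const_nhds (x := (M3+M2+ξ^2*M1+2*M2)) |>.mul hψt.norm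
      simpa using h
  have hφt : Tendsto φ (nhdsWithin 0 (Ioi 0)) (nhds 0) := by
    rw [hφ]
    have h2 : Tendsto (fun s => (ξ:ℂ)^2 * ψ s) (nhdsWithin 0 (Ioi 0)) (nhds 0) := by
      simpa using (tendsto_const_nhds (x := (ξ:ℂ)^2)).mul hψt
    simpa using hLtend.sub h2
  have hA3 : Tendsto (fun s : ℝ => (s:ℂ) * (φ s * (starRingEnd ℂ) (p1 s)))
      (nhdsWithin 0 (Ioi 0)) (nhds 0) := by
    have hsc : Tendsto (fun s : ℝ => (s:ℂ)) (nhdsWithin 0 (Ioi 0)) (nhds 0) := by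
      simpa using (Complex.continuous_ofReal.tendsto 0).mono_left
        (nhdsWithin_le_nhds (s := Ioi (0:ℝ)))
    have hcj : Tendsto (fun s => (starRingEnd ℂ) (p1 s)) (nhdsWithin 0 (Ioi 0))
        (nhds ((starRingEnd ℂ) (p1 0))) :=
      ((Complex.continuous_conj.comp hc1.continuous).tendsto 0).mono_left
        (nhdsWithin_le_nhds (s := Ioi (0:ℝ)))
    simpa using hsc.mul (hφt.mul hcj)
  have hGt : Tendsto G (nhdsWithin 0 (Ioi 0)) (nhds 0) := by
    have hGsplit : G = fun s => Complex.I*(ξ:ℂ)*((Ubar Φ s : ℝ):ℂ)*up s*(starRingEnd ℂ) (ψ s)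
        - ((s:ℂ)*(φd s*(starRingEnd ℂ) (ψ s)) - (s:ℂ)*(φ s*(starRingEnd ℂ) (p1 s))) := by
      funext s; rw [hG]; ring
    rw [hGsplit]
    simpa using hA1.sub (hA2.sub hA3)
  have hHt : Tendsto H (nhdsWithin 0 (Ioi 0)) (nhds 0) := by
    rw [hH]
    have h1 : Tendsto (fun s => (G s).im) (nhdsWithin 0 (Ioi 0)) (nhds 0) := by
      have := (Complex.continuous_im.tendsto 0).comp hGt
      simpa [Function.comp_def] using this
    have h2 : Tendsto (fun s : ℝ => ξ*Q*(s^2*‖ψ s‖^2)) (nhdsWithin 0 (Ioi 0)) (nhds 0) := by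
      have hc : Continuous fun s : ℝ => ξ*Q*(s^2*‖ψ s‖^2) :=
        continuous_const.mul ((continuous_pow 2).mul (hψi.continuous.norm.pow 2))
      have := (hc.tendsto 0).mono_left (nhdsWithin_le_nhds (s := Ioi (0:ℝ)))
      simpa using this
    simpa using h1.add h2
  -- H 1 = 0
  have hH1 : H 1 = 0 := by
    rw [hH, hG]
    simp [hψ1, hψd1]
  -- continuity of H away from 0
  have hnei : ∀ x ∈ Ioi (0:ℝ), (x:ℂ) ≠ 0 := fun x hx =>
    Complex.ofReal_ne_zero.2 (ne_of_gt hx)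
  have hφcontOn : ContinuousOn φ (Ioi (0:ℝ)) := by
    rw [hφexp]
    exact ((hc2.continuous.continuousOn.add
      (hc1.continuous.continuousOn.div Complex.continuous_ofReal.continuousOn hnei)).sub
      (hψi.continuous.continuousOn.div ((Complex.continuous_ofReal.pow 2).continuousOn)
        (fun x hx => pow_ne_zero 2 (hnei x hx)))).sub
      (continuous_const.mul hψi.continuous).continuousOn
  have hφdcontOn : ContinuousOn φd (Ioi (0:ℝ)) := by
    rw [hφd]
    exact ((((hc3.continuous.continuousOn.add
      (hc2.continuous.continuousOn.div Complex.continuous_ofReal.continuousOn hnei)).sub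
      ((continuous_const.mul hc1.continuous).continuousOn.div
        ((Complex.continuous_ofReal.pow 2).continuousOn)
        (fun x hx => pow_ne_zero 2 (hnei x hx)))).add
      ((continuous_const.mul hψi.continuous).continuousOn.div
        ((Complex.continuous_ofReal.pow 3).continuousOn)
        (fun x hx => pow_ne_zero 3 (hnei x hx)))).sub
      (continuous_const.mul hc1.continuous).continuousOn)
  have hHcontOn : ContinuousOn H (Ioi (0:ℝ)) := by
    rw [hH]
    apply ContinuousOn.add
    · apply Complex.continuous_im.comp_continuousOn
      rw [hG]
      apply ContinuousOn.sub
      · exact (((continuous_const.mul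
          (Complex.continuous_ofReal.comp hUcont)).mul hupcont).mul
          (Complex.continuous_conj.comp hψi.continuous)).continuousOn
      · exact Complex.continuous_ofReal.continuousOn.mul
          ((hφdcontOn.mul (Complex.continuous_conj.comp hψi.continuous).continuousOn).sub
            (hφcontOn.mul (Complex.continuous_conj.comp hc1.continuous).continuousOn))
    · exact (continuous_const.mul ((continuous_pow 2).mul
        (hψi.continuous.norm.pow 2))).continuousOn
  -- FTC on [ε, 1]
  have hIoc : ∀ ε ∈ Ioo (0:ℝ) 1, (∫ x in Ioc ε 1, cf x) = - H ε := by
    intro ε hε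
    have hsub : Icc ε 1 ⊆ Ioi (0:ℝ) := fun x hx => lt_of_lt_of_le hε.1 hx.1
    have hd : ∀ x ∈ Ioo ε 1, HasDerivAt H (cf x) x := fun x hx =>
      hmain x ⟨lt_trans hε.1 hx.1, hx.2⟩
    have hint : IntervalIntegrable cf volume ε 1 :=
      (intervalIntegrable_iff_integrableOn_Ioc_of_le hε.2.le).2
        (hcfint.mono_set (Ioc_subset_Ioc hε.1.le le_rfl))
    have hFTC := intervalIntegral.integral_eq_sub_of_hasDerivAt_of_le hε.2.le
      (hHcontOn.mono hsub) hd hint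
    rw [intervalIntegral.integral_of_le hε.2.le] at hFTC
    rw [hFTC, hH1]
    ring
  -- limits
  have hlim1 := tendsto_tail_integral hcfint hcfb
  have hlim2 : Tendsto (fun ε => ∫ x in Ioc ε 1, cf x) (nhdsWithin 0 (Ioi 0)) (nhds 0) := by
    have hneg : Tendsto (fun ε => - H ε) (nhdsWithin 0 (Ioi 0)) (nhds 0) := by
      simpa using hHt.neg
    apply hneg.congr'
    filter_upwards [Ioo_mem_nhdsGT_of_mem
      (⟨le_refl 0, zero_lt_one⟩ : (0:ℝ) ∈ Ico (0:ℝ) 1)] with ε hε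
    exact (hIoc ε hε).symm
  have hzero : (∫ x in Ioc (0:ℝ) 1, cf x) = 0 := tendsto_nhds_unique hlim1 hlim2
  -- split the integral
  have hsplit : (∫ x in Ioc (0:ℝ) 1, cf x)
      = ξ * (∫ x in Ioc (0:ℝ) 1, f1 x) + ξ * (∫ x in Ioc (0:ℝ) 1, f2 x)
        + ξ^3 * (∫ x in Ioc (0:ℝ) 1, f3 x) := by
    have A : (∫ x in Ioc (0:ℝ) 1, (ξ*f1 x + ξ*f2 x + ξ^3*f3 x))
        = (∫ x in Ioc (0:ℝ) 1, (ξ*f1 x + ξ*f2 x)) + ∫ x in Ioc (0:ℝ) 1, ξ^3*f3 x :=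
      integral_add ((hf1int.const_mul ξ).add (hf2int.const_mul ξ)) (hf3int.const_mul (ξ^3))
    have B : (∫ x in Ioc (0:ℝ) 1, (ξ*f1 x + ξ*f2 x))
        = (∫ x in Ioc (0:ℝ) 1, ξ*f1 x) + ∫ x in Ioc (0:ℝ) 1, ξ*f2 x :=
      integral_add (hf1int.const_mul ξ) (hf2int.const_mul ξ)
    simp only [hcf]
    rw [A, B, integral_const_mul, integral_const_mul, integral_const_mul]
  have hre : (∫ x in Ioc (0:ℝ) 1, f1 x)
      = (∫ x in Ioc (0:ℝ) 1, Fr x * (starRingEnd ℂ) (ψ x) * (x:ℂ)).re := by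
    rw [hf1]
    simpa using integral_re hFcint
  -- rewrite the goal
  have hderivu : (deriv fun s : ℝ => (s:ℂ) * ψ s) = up := by
    funext t
    rw [show (fun s : ℝ => (s:ℂ) * ψ s) = (fun s : ℝ => (s:ℂ)) * ψ from rfl,
      ((hid t).mul (hD0 t)).deriv, hup]
    ring
  rw [hderivu]
  have e2 : (∫ r in Ioo (0:ℝ) 1, Ubar Φ r / r * ‖up r‖^2) = ∫ x in Ioc (0:ℝ) 1, f2 x := by
    rw [hf2, integral_Ioc_eq_integral_Ioo]
  have e3 : (∫ r in Ioo (0:ℝ) 1, Ubar Φ r * ‖ψ r‖^2 * r) = ∫ x in Ioc (0:ℝ) 1, f3 x := by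
    rw [hf3, integral_Ioc_eq_integral_Ioo]
  have e1 : (∫ r in Ioo (0:ℝ) 1, Fr r * (starRingEnd ℂ) (ψ r) * (r:ℂ))
      = ∫ x in Ioc (0:ℝ) 1, Fr x * (starRingEnd ℂ) (ψ x) * (x:ℂ) :=
    (integral_Ioc_eq_integral_Ioo).symm
  rw [e2, e3, e1, Complex.re_ofReal_mul, ← hre]
  linarith [hzero, hsplit]
end

section
/- Let Φ ≥ 1, ξ ∈ ℝ, F ∈ C^∞([0,1], ℂ), and suppose v ∈ C^∞([0,1], ℂ) satisfies v(0) = v(1) = 0 and, for all r ∈ (0,1), the equation iξ Ū(r) v(r) − (Lv)(r) + ξ² v(r) = F(r). Then the identity iξ ∫₀¹ Ū(r) |v(r)|² r dr + ∫₀¹ |(d/dr)(r v(r))|² (1/r) dr + ξ² ∫₀¹ |v(r)|² r dr = ∫₀¹ F(r) \overline{v(r)} r dr holds. -/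
open MeasureTheory Set Filter

/-- the energy identity for the swirl equation. -/
theorem stmt15 (Φ ξ : ℝ) (F v : ℝ → ℂ) (hΦ : 1 ≤ Φ)
    (hF : ContDiff ℝ (⊤ : ℕ∞) F) (hv : ContDiff ℝ (⊤ : ℕ∞) v) (hv0 : v 0 = 0) (hv1 : v 1 = 0)
    (heq : ∀ r ∈ Ioo (0:ℝ) 1,
      Complex.I * (ξ : ℂ) * (Ubar Φ r : ℂ) * v r - Lop v r + (ξ:ℂ)^2 * v r = F r) :
    Complex.I * (ξ : ℂ)
        * ((∫ r in Ioo (0:ℝ) 1, Ubar Φ r * ‖v r‖ ^ 2 * r : ℝ) : ℂ)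
      + ((∫ r in Ioo (0:ℝ) 1, ‖deriv (fun s : ℝ => (s:ℂ) * v s) r‖ ^ 2 / r : ℝ) : ℂ)
      + (ξ:ℂ)^2 * ((∫ r in Ioo (0:ℝ) 1, ‖v r‖ ^ 2 * r : ℝ) : ℂ)
    = ∫ r in Ioo (0:ℝ) 1, F r * (starRingEnd ℂ) (v r) * (r : ℂ) := by
  -- differentiability facts
  have hv' : ContDiff ℝ (↑(⊤:ℕ∞)) v := hv.of_le (by simp)
  have hvd : Differentiable ℝ v := hv'.differentiable (by simp)
  have hvc : Continuous v := hvd.continuous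
  have h1 : ContDiff ℝ (↑(⊤:ℕ∞)) (deriv v) := (contDiff_infty_iff_deriv.mp hv').2
  have hvd1 : Differentiable ℝ (deriv v) := h1.differentiable (by simp)
  have hvc1 : Continuous (deriv v) := hvd1.continuous
  have hvc2 : Continuous (deriv (deriv v)) := (contDiff_infty_iff_deriv.mp h1).2.continuous
  -- dw is the derivative of s ↦ s * v s
  set dw : ℝ → ℂ := fun s => v s + (s:ℂ) * deriv v s with hdw_def
  have hwd : ∀ x : ℝ, HasDerivAt (fun s : ℝ => (s:ℂ) * v s) (dw x) x := by
    intro x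
    have h1 : HasDerivAt (fun s : ℝ => (s:ℂ)) 1 x := by
      simpa using (hasDerivAt_id x).ofReal_comp
    exact (h1.mul (hvd x).hasDerivAt).congr_deriv (by simp [hdw_def])
  have hdw : (deriv fun s : ℝ => (s:ℂ) * v s) = dw := funext fun x => (hwd x).deriv
  have hdwc : Continuous dw := by
    exact hvc.add ((Complex.continuous_ofReal.comp continuous_id).mul hvc1)
  -- conjugation derivative
  have hconj : ∀ x : ℝ, HasDerivAt (fun s => (starRingEnd ℂ) (v s))
      ((starRingEnd ℂ) (deriv v x)) x := by
    intro x
    have := (hvd x).hasDerivAt.star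
    simp only [starRingEnd_apply]; exact this
  -- the boundary function G and its derivative
  set G : ℝ → ℂ := fun s => dw s * (starRingEnd ℂ) (v s) with hG_def
  set G' : ℝ → ℂ := fun s =>
      (2 * deriv v s + (s:ℂ) * deriv (deriv v) s) * (starRingEnd ℂ) (v s)
        + dw s * (starRingEnd ℂ) (deriv v s) with hG'_def
  have hG : ∀ x : ℝ, HasDerivAt G (G' x) x := by
    intro x
    have h1 : HasDerivAt (fun s : ℝ => (s:ℂ)) 1 x := by
      simpa using (hasDerivAt_id x).ofReal_comp
    have hdwD : HasDerivAt dw (2 * deriv v x + (x:ℂ) * deriv (deriv v) x) x := by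
      have := (hvd x).hasDerivAt.add (h1.mul (hvd1 x).hasDerivAt)
      exact this.congr_deriv (by ring)
    exact hdwD.mul (hconj x)
  have hG'c : Continuous G' := by
    apply Continuous.add
    · exact ((continuous_const.mul hvc1).add
        ((Complex.continuous_ofReal.comp continuous_id).mul hvc2)).mul
        (Complex.continuous_conj.comp hvc)
    · exact hdwc.mul (Complex.continuous_conj.comp hvc1)
  -- FTC: the integral of G' over (0,1) vanishes
  have hFTC : ∫ r in Ioo (0:ℝ) 1, G' r = 0 := by
    have h := intervalIntegral.integral_eq_sub_of_hasDerivAt (f := G) (f' := G')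
      (a := 0) (b := 1) (fun x _ => hG x) (hG'c.intervalIntegrable 0 1)
    rw [intervalIntegral.integral_of_le zero_le_one,
      MeasureTheory.integral_Ioc_eq_integral_Ioo] at h
    rw [h]
    simp [hG_def, hdw_def, hv0, hv1]
  -- bound for the singular integrand
  obtain ⟨M, hM⟩ : ∃ M, ∀ x ∈ Icc (0:ℝ) 1, ‖deriv v x‖ ≤ M :=
    isCompact_Icc.exists_bound_of_continuousOn hvc1.continuousOn
  have hM0 : 0 ≤ M := le_trans (norm_nonneg _) (hM 0 ⟨le_refl 0, zero_le_one⟩)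
  have hvbound : ∀ r ∈ Icc (0:ℝ) 1, ‖v r‖ ≤ M * r := by
    intro r hr
    have := (convex_Icc (0:ℝ) 1).norm_image_sub_le_of_norm_hasDerivWithin_le
      (f := v) (f' := deriv v) (fun x hx => (hvd x).hasDerivAt.hasDerivWithinAt)
      hM ⟨le_refl 0, zero_le_one⟩ hr
    simpa [hv0, abs_of_nonneg hr.1] using this
  have hdwbound : ∀ r ∈ Ioo (0:ℝ) 1, ‖dw r‖ ≤ 2 * M * r := by
    intro r hr
    have h1 : ‖v r‖ ≤ M * r := hvbound r (Ioo_subset_Icc_self hr)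
    have h2 : ‖(r:ℂ) * deriv v r‖ ≤ r * M := by
      rw [norm_mul, Complex.norm_real, Real.norm_eq_abs, abs_of_nonneg hr.1.le]
      exact mul_le_mul_of_nonneg_left (hM r (Ioo_subset_Icc_self hr)) hr.1.le
    calc ‖dw r‖ ≤ ‖v r‖ + ‖(r:ℂ) * deriv v r‖ := norm_add_le _ _
      _ ≤ M * r + r * M := add_le_add h1 h2
      _ = 2 * M * r := by ring
  -- integrability facts
  have hmIoo : MeasurableSet (Ioo (0:ℝ) 1) := measurableSet_Ioo
  have hFc : Continuous F := hF.continuous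
  have hUc : Continuous (Ubar Φ) := by
    unfold Ubar; continuity
  have hBint : IntegrableOn (fun r => ‖dw r‖ ^ 2 / r) (Ioo (0:ℝ) 1) volume := by
    refine Measure.integrableOn_of_bounded (M := 4 * M ^ 2) ?_ ?_ ?_
    · rw [Real.volume_Ioo]; exact ENNReal.ofReal_ne_top
    · exact ((hdwc.norm.pow 2).measurable.div measurable_id).aestronglyMeasurable
    · rw [ae_restrict_iff' hmIoo]
      filter_upwards with r hr
      have h1 : ‖dw r‖ ≤ 2 * M * r := hdwbound r hr
      have h2 : (0:ℝ) < r := hr.1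
      have h3 : r < 1 := hr.2
      rw [Real.norm_eq_abs, abs_of_nonneg (by positivity)]
      rw [div_le_iff₀ h2]
      nlinarith [norm_nonneg (dw r), sq_nonneg M]
  have hAint : IntegrableOn (fun r => Ubar Φ r * ‖v r‖ ^ 2 * r) (Ioo (0:ℝ) 1) volume :=
    (((hUc.mul (hvc.norm.pow 2)).mul continuous_id).continuousOn.integrableOn_Icc
      (a := 0) (b := 1)).mono_set Ioo_subset_Icc_self
  have hCint : IntegrableOn (fun r => ‖v r‖ ^ 2 * r) (Ioo (0:ℝ) 1) volume :=
    (((hvc.norm.pow 2).mul continuous_id).continuousOn.integrableOn_Icc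
      (a := 0) (b := 1)).mono_set Ioo_subset_Icc_self
  have hDint : IntegrableOn (fun r => F r * (starRingEnd ℂ) (v r) * (r:ℂ))
      (Ioo (0:ℝ) 1) volume :=
    (((hFc.mul (Complex.continuous_conj.comp hvc)).mul
      Complex.continuous_ofReal).continuousOn.integrableOn_Icc
      (a := 0) (b := 1)).mono_set Ioo_subset_Icc_self
  -- complex-valued integrable versions
  have hA' : IntegrableOn (fun r => ((Ubar Φ r * ‖v r‖ ^ 2 * r : ℝ) : ℂ))
      (Ioo (0:ℝ) 1) volume := hAint.ofReal
  have hB' : IntegrableOn (fun r => ((‖dw r‖ ^ 2 / r : ℝ) : ℂ))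
      (Ioo (0:ℝ) 1) volume := hBint.ofReal
  have hC' : IntegrableOn (fun r => ((‖v r‖ ^ 2 * r : ℝ) : ℂ))
      (Ioo (0:ℝ) 1) volume := hCint.ofReal
  have hXint : IntegrableOn (fun r =>
      Complex.I * (ξ:ℂ) * ((Ubar Φ r * ‖v r‖ ^ 2 * r : ℝ) : ℂ)
        + (((‖dw r‖ ^ 2 / r : ℝ) : ℂ) + (ξ:ℂ)^2 * ((‖v r‖ ^ 2 * r : ℝ) : ℂ)))
      (Ioo (0:ℝ) 1) volume :=
    (hA'.const_mul _).add (hB'.add (hC'.const_mul _))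
  -- pointwise identity on (0,1)
  have key : EqOn (fun r : ℝ =>
      F r * (starRingEnd ℂ) (v r) * (r:ℂ)
        - (Complex.I * (ξ:ℂ) * ((Ubar Φ r * ‖v r‖ ^ 2 * r : ℝ) : ℂ)
          + (((‖dw r‖ ^ 2 / r : ℝ) : ℂ) + (ξ:ℂ)^2 * ((‖v r‖ ^ 2 * r : ℝ) : ℂ))))
      (fun r => -G' r) (Ioo (0:ℝ) 1) := by
    intro r hr
    have hr0 : (r:ℂ) ≠ 0 := Complex.ofReal_ne_zero.mpr hr.1.ne'
    have c1 : ((‖v r‖ ^ 2 : ℝ) : ℂ) = v r * (starRingEnd ℂ) (v r) := by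
      rw [Complex.mul_conj]; norm_cast
      simp [Complex.normSq_eq_norm_sq]
    have c2 : ((‖dw r‖ ^ 2 : ℝ) : ℂ) = dw r * (starRingEnd ℂ) (dw r) := by
      rw [Complex.mul_conj]; norm_cast
      simp [Complex.normSq_eq_norm_sq]
    simp only
    rw [← heq r hr]
    push_cast [c1, c2]
    simp only [Lop, hdw_def, hG'_def, map_add, map_mul, Complex.conj_ofReal]
    field_simp
    ring
  -- assemble
  have hsum : (∫ r in Ioo (0:ℝ) 1, F r * (starRingEnd ℂ) (v r) * (r:ℂ))
      - ∫ r in Ioo (0:ℝ) 1,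
        (Complex.I * (ξ:ℂ) * ((Ubar Φ r * ‖v r‖ ^ 2 * r : ℝ) : ℂ)
          + (((‖dw r‖ ^ 2 / r : ℝ) : ℂ) + (ξ:ℂ)^2 * ((‖v r‖ ^ 2 * r : ℝ) : ℂ))) = 0 := by
    rw [← integral_sub hDint hXint, setIntegral_congr_fun hmIoo key, integral_neg, hFTC,
      neg_zero]
  have hXeq : (∫ r in Ioo (0:ℝ) 1,
        (Complex.I * (ξ:ℂ) * ((Ubar Φ r * ‖v r‖ ^ 2 * r : ℝ) : ℂ)
          + (((‖dw r‖ ^ 2 / r : ℝ) : ℂ) + (ξ:ℂ)^2 * ((‖v r‖ ^ 2 * r : ℝ) : ℂ))))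
      = Complex.I * (ξ:ℂ) * ((∫ r in Ioo (0:ℝ) 1, Ubar Φ r * ‖v r‖ ^ 2 * r : ℝ) : ℂ)
        + ((∫ r in Ioo (0:ℝ) 1, ‖dw r‖ ^ 2 / r : ℝ) : ℂ)
        + (ξ:ℂ)^2 * ((∫ r in Ioo (0:ℝ) 1, ‖v r‖ ^ 2 * r : ℝ) : ℂ) := by
    have e1 : (∫ r in Ioo (0:ℝ) 1,
          (Complex.I * (ξ:ℂ) * ((Ubar Φ r * ‖v r‖ ^ 2 * r : ℝ) : ℂ)
            + (((‖dw r‖ ^ 2 / r : ℝ) : ℂ) + (ξ:ℂ)^2 * ((‖v r‖ ^ 2 * r : ℝ) : ℂ))))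
        = (∫ r in Ioo (0:ℝ) 1, Complex.I * (ξ:ℂ) * ((Ubar Φ r * ‖v r‖ ^ 2 * r : ℝ) : ℂ))
          + ∫ r in Ioo (0:ℝ) 1,
              (((‖dw r‖ ^ 2 / r : ℝ) : ℂ) + (ξ:ℂ)^2 * ((‖v r‖ ^ 2 * r : ℝ) : ℂ)) :=
      integral_add (hA'.const_mul _) (hB'.add (hC'.const_mul _))
    have e2 : (∫ r in Ioo (0:ℝ) 1,
          (((‖dw r‖ ^ 2 / r : ℝ) : ℂ) + (ξ:ℂ)^2 * ((‖v r‖ ^ 2 * r : ℝ) : ℂ)))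
        = (∫ r in Ioo (0:ℝ) 1, ((‖dw r‖ ^ 2 / r : ℝ) : ℂ))
          + ∫ r in Ioo (0:ℝ) 1, (ξ:ℂ)^2 * ((‖v r‖ ^ 2 * r : ℝ) : ℂ) :=
      integral_add hB' (hC'.const_mul _)
    have e3 : (∫ r in Ioo (0:ℝ) 1, Complex.I * (ξ:ℂ) * ((Ubar Φ r * ‖v r‖ ^ 2 * r : ℝ) : ℂ))
        = Complex.I * (ξ:ℂ) * ∫ r in Ioo (0:ℝ) 1, ((Ubar Φ r * ‖v r‖ ^ 2 * r : ℝ) : ℂ) :=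
      integral_const_mul _ _
    have e4 : (∫ r in Ioo (0:ℝ) 1, (ξ:ℂ)^2 * ((‖v r‖ ^ 2 * r : ℝ) : ℂ))
        = (ξ:ℂ)^2 * ∫ r in Ioo (0:ℝ) 1, ((‖v r‖ ^ 2 * r : ℝ) : ℂ) :=
      integral_const_mul _ _
    have e5 : (∫ r in Ioo (0:ℝ) 1, ((Ubar Φ r * ‖v r‖ ^ 2 * r : ℝ) : ℂ))
        = ((∫ r in Ioo (0:ℝ) 1, Ubar Φ r * ‖v r‖ ^ 2 * r : ℝ) : ℂ) := integral_ofReal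
    have e6 : (∫ r in Ioo (0:ℝ) 1, ((‖dw r‖ ^ 2 / r : ℝ) : ℂ))
        = ((∫ r in Ioo (0:ℝ) 1, ‖dw r‖ ^ 2 / r : ℝ) : ℂ) := integral_ofReal
    have e7 : (∫ r in Ioo (0:ℝ) 1, ((‖v r‖ ^ 2 * r : ℝ) : ℂ))
        = ((∫ r in Ioo (0:ℝ) 1, ‖v r‖ ^ 2 * r : ℝ) : ℂ) := integral_ofReal
    rw [e1, e2, e3, e4, e5, e6, e7]
    ring
  rw [sub_eq_zero] at hsum
  simp only [hdw]
  rw [hsum, hXeq]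
end

section
/- There exists a constant C > 0, independent of Φ, ξ and the data, such that the following holds. Let Φ ≥ 1, ξ ∈ ℝ, F ∈ C^∞([0,1], ℂ), and suppose v ∈ C^∞([0,1], ℂ) satisfies v(0) = v(1) = 0 and, for all r ∈ (0,1), the equation iξ Ū(r) v(r) − (Lv)(r) + ξ² v(r) = F(r). Then ξ² ∫₀¹ (1 − r²) |v(r)|² r dr ≤ C Φ^{−2/3} ∫₀¹ |F(r)|² r dr. -/
open MeasureTheory Set Filter

/-- Continuous functions are integrable on `Ioo 0 1`. -/
lemma contIntOn {E : Type*} [NormedAddCommGroup E] {f : ℝ → E} (hf : Continuous f) :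
    IntegrableOn f (Ioo (0:ℝ) 1) :=
  (hf.continuousOn.integrableOn_Icc).mono_set Ioo_subset_Icc_self

set_option maxHeartbeats 4000000 in
/-- estimate `ξ² ∫₀¹ (1−r²)|v|² r dr ≤ C Φ^{−2/3} ∫₀¹ |F|² r dr`
for the swirl equation. -/
theorem stmt16 :
    ∃ C : ℝ, 0 < C ∧ ∀ (Φ ξ : ℝ) (F v : ℝ → ℂ), 1 ≤ Φ →
      ContDiff ℝ (⊤ : ℕ∞) F → ContDiff ℝ (⊤ : ℕ∞) v → v 0 = 0 → v 1 = 0 →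
      (∀ r ∈ Ioo (0:ℝ) 1,
        Complex.I * (ξ : ℂ) * (Ubar Φ r : ℂ) * v r - Lop v r + (ξ:ℂ)^2 * v r = F r) →
      ENNReal.ofReal (ξ ^ 2)
          * (∫⁻ r in Ioo (0:ℝ) 1, ENNReal.ofReal ((1 - r ^ 2) * ‖v r‖ ^ 2 * r))
        ≤ ENNReal.ofReal (C / Φ ^ ((2:ℝ)/3))
            * ∫⁻ r in Ioo (0:ℝ) 1, ENNReal.ofReal (‖F r‖ ^ 2 * r) := by
  refine ⟨2, by norm_num, ?_⟩
  intro Φ ξ F v hΦ hF hv hv0 hv1 heq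
  have hΦ0 : (0:ℝ) < Φ := lt_of_lt_of_le one_pos hΦ
  have meas : MeasurableSet (Ioo (0:ℝ) 1) := measurableSet_Ioo
  have hπ : (0:ℝ) < Real.pi := Real.pi_pos
  -- smoothness facts
  have hvi : ContDiff ℝ (⊤ : ℕ∞) v := hv.of_le (by simp)
  have hvc : Continuous v := hv.continuous
  have hv'c : Continuous (deriv v) := hv.continuous_deriv (by simp)
  have hdv : ContDiff ℝ (⊤ : ℕ∞) (deriv v) := (contDiff_infty_iff_deriv.mp hvi).2
  have hv''c : Continuous (deriv (deriv v)) :=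
    hdv.continuous_deriv (by exact_mod_cast le_top)
  have hdiffv : Differentiable ℝ v := hv.differentiable (by simp)
  have hdiffdv : Differentiable ℝ (deriv v) :=
    hdv.differentiable (by simp)
  have hFc : Continuous F := hF.continuous
  -- global bound on deriv v, and linear bound on v
  obtain ⟨K, hK⟩ := (isCompact_Icc : IsCompact (Icc (0:ℝ) 1)).exists_bound_of_continuousOn
    hv'c.continuousOn
  have hK0 : 0 ≤ K := le_trans (norm_nonneg _) (hK 0 ⟨le_refl _, zero_le_one⟩)
  have hvbound : ∀ r ∈ Icc (0:ℝ) 1, ‖v r‖ ≤ K * r := by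
    intro r hr
    have h := norm_image_sub_le_of_norm_deriv_le_segment'
      (f := v) (f' := deriv v) (a := 0) (b := 1) (C := K)
      (fun x _ => (hdiffv x).hasDerivAt.hasDerivWithinAt)
      (fun x hx => hK x (Ico_subset_Icc_self hx)) r hr
    simpa [hv0] using h
  -- the integrals
  set N : ℝ := ∫ r in Ioo (0:ℝ) 1, ‖v r‖^2 * r with hN_def
  set P : ℝ := ∫ r in Ioo (0:ℝ) 1, (1 - r^2) * ‖v r‖^2 * r with hP_def
  set M : ℝ := ∫ r in Ioo (0:ℝ) 1, ‖F r‖^2 * r with hM_def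
  set D : ℝ := ∫ r in Ioo (0:ℝ) 1, (‖v r‖^2 / r + r * ‖deriv v r‖^2) with hD_def
  set B : ℝ := ∫ r in Ioo (0:ℝ) 1, ‖F r‖ * ‖v r‖ * r with hB_def
  set J : ℂ := ∫ r in Ioo (0:ℝ) 1, F r * (starRingEnd ℂ) (v r) * r with hJ_def
  -- integrability
  have intN : IntegrableOn (fun r => ‖v r‖^2 * r) (Ioo (0:ℝ) 1) :=
    contIntOn (by fun_prop)
  have intP : IntegrableOn (fun r => (1 - r^2) * ‖v r‖^2 * r) (Ioo (0:ℝ) 1) :=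
    contIntOn (by fun_prop)
  have intM : IntegrableOn (fun r => ‖F r‖^2 * r) (Ioo (0:ℝ) 1) :=
    contIntOn (by fun_prop)
  have intB : IntegrableOn (fun r => ‖F r‖ * ‖v r‖ * r) (Ioo (0:ℝ) 1) :=
    contIntOn (by fun_prop)
  have intq : IntegrableOn (fun r => ‖v r‖^2 / r + r * ‖deriv v r‖^2) (Ioo (0:ℝ) 1) := by
    apply Integrable.mono' (g := fun _ => 2 * K^2)
      (integrable_const _)
    · apply AEStronglyMeasurable.add
      · exact ((hvc.norm.pow 2).measurable.div measurable_id).aestronglyMeasurable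
      · exact (continuous_id.mul (hv'c.norm.pow 2)).aestronglyMeasurable
    · rw [ae_restrict_iff' meas]
      refine ae_of_all _ (fun r hr => ?_)
      have hr0 : 0 < r := hr.1
      have hr1 : r < 1 := hr.2
      have hb1 : ‖v r‖ ≤ K * r := hvbound r ⟨hr0.le, hr1.le⟩
      have hb2 : ‖deriv v r‖ ≤ K := hK r ⟨hr0.le, hr1.le⟩
      have h1 : ‖v r‖^2 / r ≤ K^2 * r := by
        rw [div_le_iff₀ hr0]
        nlinarith [norm_nonneg (v r)]
      have h2 : r * ‖deriv v r‖^2 ≤ K^2 := by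
        nlinarith [norm_nonneg (deriv v r)]
      have h3 : 0 ≤ ‖v r‖^2 / r := by positivity
      have h4 : 0 ≤ r * ‖deriv v r‖^2 := by positivity
      rw [Real.norm_eq_abs, abs_of_nonneg (by linarith)]
      nlinarith
  have intqC : IntegrableOn (fun r => ((‖v r‖^2 / r + r * ‖deriv v r‖^2 : ℝ) : ℂ))
      (Ioo (0:ℝ) 1) := intq.ofReal
  -- derivative identity for G r = r * v'(r) * conj (v r)
  have hder : ∀ r : ℝ, HasDerivAt (fun s : ℝ => (s:ℂ) * deriv v s * (starRingEnd ℂ) (v s))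
      ((deriv v r + r * deriv (deriv v) r) * (starRingEnd ℂ) (v r)
        + (r:ℂ) * deriv v r * (starRingEnd ℂ) (deriv v r)) r := by
    intro r
    have h1 : HasDerivAt (fun s : ℝ => (s:ℂ)) 1 r := by
      simpa using (hasDerivAt_id r).ofReal_comp
    have h2 : HasDerivAt (deriv v) (deriv (deriv v) r) r := (hdiffdv r).hasDerivAt
    have h3 : HasDerivAt (fun s => (starRingEnd ℂ) (v s)) ((starRingEnd ℂ) (deriv v r)) r :=
      (hdiffv r).hasDerivAt.star
    have h := (h1.mul h2).mul h3
    refine h.congr_deriv ?_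
    simp only [Pi.mul_apply, one_mul]
  have contExpr : Continuous (fun r : ℝ =>
      (deriv v r + (r:ℂ) * deriv (deriv v) r) * (starRingEnd ℂ) (v r)
        + (r:ℂ) * deriv v r * (starRingEnd ℂ) (deriv v r)) := by
    have cconj : Continuous (starRingEnd ℂ) := RCLike.continuous_conj
    fun_prop
  have hFTC : ∫ r in Ioo (0:ℝ) 1,
      ((deriv v r + (r:ℂ) * deriv (deriv v) r) * (starRingEnd ℂ) (v r)
        + (r:ℂ) * deriv v r * (starRingEnd ℂ) (deriv v r)) = 0 := by
    have h := intervalIntegral.integral_eq_sub_of_hasDerivAt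
      (f := fun s : ℝ => (s:ℂ) * deriv v s * (starRingEnd ℂ) (v s))
      (f' := fun r : ℝ =>
        (deriv v r + (r:ℂ) * deriv (deriv v) r) * (starRingEnd ℂ) (v r)
          + (r:ℂ) * deriv v r * (starRingEnd ℂ) (deriv v r))
      (a := 0) (b := 1)
      (fun r _ => by simpa using hder r)
      (contExpr.intervalIntegrable 0 1)
    rw [intervalIntegral.integral_of_le zero_le_one, integral_Ioc_eq_integral_Ioo] at h
    rw [h]
    simp [hv1]
  -- split the integrand on Ioo
  have hsplit : ∀ r ∈ Ioo (0:ℝ) 1,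
      (deriv v r + (r:ℂ) * deriv (deriv v) r) * (starRingEnd ℂ) (v r)
        + (r:ℂ) * deriv v r * (starRingEnd ℂ) (deriv v r)
      = Lop v r * (starRingEnd ℂ) (v r) * r
        + ((‖v r‖^2 / r + r * ‖deriv v r‖^2 : ℝ) : ℂ) := by
    intro r hr
    have hr0 : (r:ℂ) ≠ 0 := Complex.ofReal_ne_zero.mpr (ne_of_gt hr.1)
    have e1 : v r * (starRingEnd ℂ) (v r) = ((‖v r‖ : ℝ) : ℂ)^2 := by
      rw [Complex.mul_conj, Complex.normSq_eq_norm_sq]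
      push_cast; ring
    have e2 : deriv v r * (starRingEnd ℂ) (deriv v r) = ((‖deriv v r‖ : ℝ) : ℂ)^2 := by
      rw [Complex.mul_conj, Complex.normSq_eq_norm_sq]
      push_cast; ring
    simp only [Lop]
    push_cast
    rw [← e1, ← e2]
    field_simp
    ring
  -- integration by parts conclusion
  have intg : IntegrableOn (fun r => Lop v r * (starRingEnd ℂ) (v r) * r) (Ioo (0:ℝ) 1) := by
    have : IntegrableOn (fun r =>
        ((deriv v r + (r:ℂ) * deriv (deriv v) r) * (starRingEnd ℂ) (v r)
          + (r:ℂ) * deriv v r * (starRingEnd ℂ) (deriv v r))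
        - ((‖v r‖^2 / r + r * ‖deriv v r‖^2 : ℝ) : ℂ)) (Ioo (0:ℝ) 1) :=
      (contIntOn contExpr).sub intqC
    refine this.congr_fun (fun r hr => ?_) meas
    beta_reduce; rw [hsplit r hr]; ring
  have hH : ∫ r in Ioo (0:ℝ) 1, Lop v r * (starRingEnd ℂ) (v r) * r = -(D:ℂ) := by
    have h1 : ∫ r in Ioo (0:ℝ) 1,
        ((deriv v r + (r:ℂ) * deriv (deriv v) r) * (starRingEnd ℂ) (v r)
          + (r:ℂ) * deriv v r * (starRingEnd ℂ) (deriv v r))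
        = ∫ r in Ioo (0:ℝ) 1, (Lop v r * (starRingEnd ℂ) (v r) * r
          + ((‖v r‖^2 / r + r * ‖deriv v r‖^2 : ℝ) : ℂ)) :=
      setIntegral_congr_fun meas hsplit
    rw [hFTC] at h1
    rw [integral_add intg intqC] at h1
    have h2 : ∫ r in Ioo (0:ℝ) 1, ((‖v r‖^2 / r + r * ‖deriv v r‖^2 : ℝ) : ℂ) = (D:ℂ) := by
      rw [hD_def]; exact integral_ofReal
    rw [h2] at h1
    linear_combination -h1
  -- the basic identity for J
  have hkey : ∀ r ∈ Ioo (0:ℝ) 1, F r * (starRingEnd ℂ) (v r) * r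
      = Complex.I * ξ * (((2*Φ/Real.pi) * ((1 - r^2) * ‖v r‖^2 * r) : ℝ) : ℂ)
        + (ξ:ℂ)^2 * ((‖v r‖^2 * r : ℝ) : ℂ)
        - Lop v r * (starRingEnd ℂ) (v r) * r := by
    intro r hr
    have e1 : v r * (starRingEnd ℂ) (v r) = ((‖v r‖ : ℝ) : ℂ)^2 := by
      rw [Complex.mul_conj, Complex.normSq_eq_norm_sq]
      push_cast; ring
    rw [← heq r hr]
    simp only [Ubar]
    push_cast
    rw [← e1]
    ring
  have hJ : J = Complex.I * ξ * (((2*Φ/Real.pi) * P : ℝ) : ℂ) + (ξ:ℂ)^2 * (N:ℂ) + (D:ℂ) := by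
    rw [hJ_def]
    rw [setIntegral_congr_fun meas hkey]
    have i1 : IntegrableOn (fun r =>
        Complex.I * ξ * (((2*Φ/Real.pi) * ((1 - r^2) * ‖v r‖^2 * r) : ℝ) : ℂ)
          + (ξ:ℂ)^2 * ((‖v r‖^2 * r : ℝ) : ℂ)) (Ioo (0:ℝ) 1) :=
      contIntOn (by fun_prop)
    rw [integral_sub i1 intg, hH]
    have i2 : IntegrableOn (fun r =>
        Complex.I * ξ * (((2*Φ/Real.pi) * ((1 - r^2) * ‖v r‖^2 * r) : ℝ) : ℂ))
        (Ioo (0:ℝ) 1) := contIntOn (by fun_prop)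
    have i3 : IntegrableOn (fun r => (ξ:ℂ)^2 * ((‖v r‖^2 * r : ℝ) : ℂ)) (Ioo (0:ℝ) 1) :=
      contIntOn (by fun_prop)
    rw [integral_add i2 i3, integral_const_mul, integral_const_mul]
    have h4 : ∫ r in Ioo (0:ℝ) 1, (((2*Φ/Real.pi) * ((1 - r^2) * ‖v r‖^2 * r) : ℝ) : ℂ)
        = (((2*Φ/Real.pi) * P : ℝ) : ℂ) := by
      rw [integral_complex_ofReal]
      norm_cast
      rw [hP_def, ← integral_const_mul]
    have h5 : ∫ r in Ioo (0:ℝ) 1, ((‖v r‖^2 * r : ℝ) : ℂ) = ((N : ℝ) : ℂ) := by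
      rw [integral_complex_ofReal, hN_def]
    rw [h4, h5]
    ring
  have hJre : J.re = ξ^2 * N + D := by
    rw [hJ]
    simp only [← Complex.ofReal_pow, Complex.add_re, Complex.mul_re, Complex.I_re,
      Complex.I_im, Complex.ofReal_re, Complex.ofReal_im]
    ring
  have hJim : J.im = ξ * ((2*Φ/Real.pi) * P) := by
    rw [hJ]
    simp only [← Complex.ofReal_pow, Complex.add_im, Complex.mul_im, Complex.mul_re,
      Complex.I_re, Complex.I_im, Complex.ofReal_re, Complex.ofReal_im]
    ring
  -- norm bound
  have hnormJ : ‖J‖ ≤ B := by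
    rw [hJ_def, hB_def]
    refine le_trans (norm_integral_le_integral_norm _) (le_of_eq ?_)
    refine setIntegral_congr_fun meas (fun r hr => ?_)
    simp [norm_mul, RCLike.norm_conj, Complex.norm_real, Real.norm_eq_abs,
      abs_of_pos hr.1]
  have hreB : J.re ≤ B :=
    le_trans (le_trans (le_abs_self _) (Complex.abs_re_le_norm J)) hnormJ
  have himB : |J.im| ≤ B := le_trans (Complex.abs_im_le_norm J) hnormJ
  -- Young inequality
  have hYoung : ∀ t : ℝ, 0 < t → B ≤ t/2 * M + 1/(2*t) * N := by
    intro t ht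
    have hmono : B ≤ ∫ r in Ioo (0:ℝ) 1,
        (t/2 * (‖F r‖^2 * r) + 1/(2*t) * (‖v r‖^2 * r)) := by
      rw [hB_def]
      refine setIntegral_mono_on intB ((intM.const_mul _).add (intN.const_mul _)) meas ?_
      intro r hr
      have h1 : 0 ≤ r * (t * ‖F r‖ - ‖v r‖)^2 := mul_nonneg hr.1.le (sq_nonneg _)
      have h2 : 2*t*(‖F r‖ * ‖v r‖ * r) ≤ t^2*(‖F r‖^2*r) + ‖v r‖^2*r := by nlinarith [h1]
      have h3 : t/2*(‖F r‖^2*r) + 1/(2*t)*(‖v r‖^2*r)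
          = (t^2*(‖F r‖^2*r) + ‖v r‖^2*r)/(2*t) := by field_simp
      rw [h3, le_div_iff₀ (by positivity)]
      linarith [h2]
    rw [integral_add (intM.const_mul _) (intN.const_mul _),
      integral_const_mul, integral_const_mul] at hmono
    exact hmono
  -- positivity and comparison facts
  have hN0 : 0 ≤ N :=
    setIntegral_nonneg meas (fun r hr => mul_nonneg (sq_nonneg _) hr.1.le)
  have hM0 : 0 ≤ M :=
    setIntegral_nonneg meas (fun r hr => mul_nonneg (sq_nonneg _) hr.1.le)
  have hP0 : 0 ≤ P := by
    refine setIntegral_nonneg meas (fun r hr => ?_)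
    have h1 : (0:ℝ) ≤ 1 - r^2 := by nlinarith [hr.1, hr.2]
    exact mul_nonneg (mul_nonneg h1 (sq_nonneg _)) hr.1.le
  have hPN : P ≤ N := by
    refine setIntegral_mono_on intP intN meas (fun r hr => ?_)
    nlinarith [mul_nonneg (mul_nonneg (sq_nonneg r) (sq_nonneg ‖v r‖)) hr.1.le]
  have hDN : N ≤ D := by
    refine setIntegral_mono_on intN intq meas (fun r hr => ?_)
    have hr0 : 0 < r := hr.1
    have h1 : ‖v r‖^2 * r ≤ ‖v r‖^2 / r := by
      rw [le_div_iff₀ hr0]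
      have hrr : r * r ≤ 1 := by nlinarith [hr.2, hr0]
      nlinarith [mul_le_mul_of_nonneg_left hrr (sq_nonneg ‖v r‖)]
    nlinarith [mul_nonneg hr0.le (sq_nonneg ‖deriv v r‖)]
  -- convert the goal to a real inequality
  have nnP : (0 : ℝ → ℝ) ≤ᵐ[volume.restrict (Ioo (0:ℝ) 1)]
      fun r => (1 - r^2) * ‖v r‖^2 * r := by
    rw [EventuallyLE, ae_restrict_iff' meas]
    refine ae_of_all _ (fun r hr => ?_)
    simp only [Pi.zero_apply]
    have h1 : (0:ℝ) ≤ 1 - r^2 := by nlinarith [hr.1, hr.2]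
    exact mul_nonneg (mul_nonneg h1 (sq_nonneg _)) hr.1.le
  have nnM : (0 : ℝ → ℝ) ≤ᵐ[volume.restrict (Ioo (0:ℝ) 1)] fun r => ‖F r‖^2 * r := by
    rw [EventuallyLE, ae_restrict_iff' meas]
    refine ae_of_all _ (fun r hr => ?_)
    simp only [Pi.zero_apply]
    exact mul_nonneg (sq_nonneg _) hr.1.le
  have hlhs : ∫⁻ r in Ioo (0:ℝ) 1, ENNReal.ofReal ((1 - r^2) * ‖v r‖^2 * r)
      = ENNReal.ofReal P := (ofReal_integral_eq_lintegral_ofReal intP nnP).symm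
  have hrhs : ∫⁻ r in Ioo (0:ℝ) 1, ENNReal.ofReal (‖F r‖^2 * r)
      = ENNReal.ofReal M := (ofReal_integral_eq_lintegral_ofReal intM nnM).symm
  rw [hlhs, hrhs, ← ENNReal.ofReal_mul (sq_nonneg ξ),
    ← ENNReal.ofReal_mul (by positivity : (0:ℝ) ≤ 2 / Φ ^ ((2:ℝ)/3))]
  apply ENNReal.ofReal_le_ofReal
  -- the real inequality ξ² P ≤ (2/Φ^{2/3}) M
  have hx : (0:ℝ) < Φ ^ ((2:ℝ)/3) := Real.rpow_pos_of_pos hΦ0 _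
  by_cases hξ : ξ^2 ≤ (Φ ^ ((2:ℝ)/3))⁻¹
  · -- small ξ
    have hNM : N ≤ M := by
      have h1 : N ≤ J.re := by rw [hJre]; nlinarith [sq_nonneg ξ]
      have h3 : B ≤ 1/2 * M + 1/2 * N := by
        have := hYoung 1 one_pos
        norm_num at this
        linarith
      linarith
    have s1 : ξ^2 * P ≤ ξ^2 * N := mul_le_mul_of_nonneg_left hPN (sq_nonneg ξ)
    have s2 : ξ^2 * N ≤ ξ^2 * M := mul_le_mul_of_nonneg_left hNM (sq_nonneg ξ)
    have s3 : ξ^2 * M ≤ (Φ ^ ((2:ℝ)/3))⁻¹ * M := mul_le_mul_of_nonneg_right hξ hM0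
    have s4 : (Φ ^ ((2:ℝ)/3))⁻¹ * M ≤ 2 / Φ ^ ((2:ℝ)/3) * M := by
      refine mul_le_mul_of_nonneg_right ?_ hM0
      rw [inv_eq_one_div]
      gcongr
      norm_num
    linarith
  · -- large ξ
    push_neg at hξ
    have hξ0 : 0 < ξ^2 := lt_trans (inv_pos.mpr hx) hξ
    have hξne : ξ ≠ 0 := by
      intro h; rw [h] at hξ0; simp at hξ0
    have habs0 : 0 < |ξ| := abs_pos.mpr hξne
    have ht := hYoung (1/ξ^2) (by positivity)
    have e : 1/(2*(1/ξ^2)) = ξ^2/2 := by field_simp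
    rw [e] at ht
    have hre : ξ^2 * N ≤ B := by
      have h1 : ξ^2 * N ≤ J.re := by rw [hJre]; nlinarith
      linarith
    have hN4 : ξ^2 * (ξ^2 * N) ≤ M := by
      have h5 : ξ^2 * N ≤ (1/ξ^2)/2 * M + ξ^2/2 * N := le_trans hre ht
      have h6 : ξ^2 * N ≤ (1/ξ^2) * M := by linarith
      have h7 := mul_le_mul_of_nonneg_left h6 hξ0.le
      calc ξ^2 * (ξ^2 * N) ≤ ξ^2 * ((1/ξ^2) * M) := h7
        _ = M := by field_simp
    have h9 : ξ^2 * N ≤ 1/ξ^2 * M := by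
      have h8 : ξ^2 * (ξ^2 * N) ≤ ξ^2 * (1/ξ^2 * M) := by
        rw [show ξ^2 * (1/ξ^2 * M) = M by field_simp]
        exact hN4
      exact le_of_mul_le_mul_left h8 hξ0
    have him : |J.im| ≤ 1/ξ^2 * M := by
      have h8 : B ≤ (1/ξ^2)/2 * M + ξ^2/2 * N := ht
      linarith
    -- relation between ξ²P and J.im
    have hfin : ξ^2 * P = Real.pi/(2*Φ) * (ξ * J.im) := by
      rw [hJim]
      field_simp
    have hstep : ξ * J.im ≤ |ξ| * (1/ξ^2 * M) := by
      refine le_trans (le_abs_self _) ?_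
      rw [abs_mul]
      exact mul_le_mul_of_nonneg_left him (abs_nonneg ξ)
    have hchain : ξ^2 * P ≤ Real.pi/(2*Φ) * (|ξ| * (1/ξ^2 * M)) := by
      rw [hfin]
      exact mul_le_mul_of_nonneg_left hstep (by positivity)
    have e2 : Real.pi/(2*Φ) * (|ξ| * (1/ξ^2 * M)) = Real.pi/2 * ((Φ * |ξ|)⁻¹ * M) := by
      field_simp
      rw [← sq_abs ξ]
    -- Φ|ξ| ≥ Φ^{2/3}
    have hx2 : (Φ ^ (-(1:ℝ)/3))^2 = (Φ ^ ((2:ℝ)/3))⁻¹ := by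
      rw [← Real.rpow_natCast (Φ ^ (-(1:ℝ)/3)) 2, ← Real.rpow_mul hΦ0.le]
      rw [← Real.rpow_neg hΦ0.le]
      norm_num
    have habsξ : Φ ^ (-(1:ℝ)/3) < |ξ| := by
      by_contra hcon
      push_neg at hcon
      have := pow_le_pow_left₀ (abs_nonneg ξ) hcon 2
      rw [sq_abs, hx2] at this
      linarith
    have hprod : Φ ^ ((2:ℝ)/3) < Φ * |ξ| := by
      have e3 : Φ * Φ ^ (-(1:ℝ)/3) = Φ ^ ((2:ℝ)/3) := by
        nth_rewrite 1 [← Real.rpow_one Φ]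
        rw [← Real.rpow_add hΦ0]
        norm_num
      calc Φ ^ ((2:ℝ)/3) = Φ * Φ ^ (-(1:ℝ)/3) := e3.symm
        _ < Φ * |ξ| := by exact mul_lt_mul_of_pos_left habsξ hΦ0
    have hinv : (Φ * |ξ|)⁻¹ ≤ (Φ ^ ((2:ℝ)/3))⁻¹ := by
      apply inv_anti₀ hx hprod.le
    have hπ4 : Real.pi ≤ 4 := Real.pi_le_four
    calc ξ^2 * P ≤ Real.pi/2 * ((Φ * |ξ|)⁻¹ * M) := by rw [← e2]; exact hchain
      _ ≤ Real.pi/2 * ((Φ ^ ((2:ℝ)/3))⁻¹ * M) := by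
          exact mul_le_mul_of_nonneg_left (mul_le_mul_of_nonneg_right hinv hM0)
            (by positivity)
      _ ≤ 2 / Φ ^ ((2:ℝ)/3) * M := by
          have hy : 0 ≤ (Φ ^ ((2:ℝ)/3))⁻¹ * M := mul_nonneg (inv_pos.mpr hx).le hM0
          have h20 : Real.pi/2 ≤ 2 := by linarith
          calc Real.pi/2 * ((Φ ^ ((2:ℝ)/3))⁻¹ * M)
              ≤ 2 * ((Φ ^ ((2:ℝ)/3))⁻¹ * M) := mul_le_mul_of_nonneg_right h20 hy
            _ = 2 / Φ ^ ((2:ℝ)/3) * M := by rw [div_eq_mul_inv]; ring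
end
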